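/- arXiv:1304.1315 — 7 statements merged into one kernel-verified Lean document; each statement's English description precedes it below -/
import Mathlib

section
/- Let G=(V,E) be a k-uniform hypergraph with maximum degree d>0, adjacency tensor A and signless Laplacian tensor Q. Then max{d, (2·Σ_{i∈[n]} d_i)/n} ≤ λ(Q) ≤ λ(A) + d. -/
open Finset

variable {α : Type*} [DecidableEq α]

/-- The degree of a vertex `i`: the number of edges containing `i`. -/
def hdeg (E : Finset (Finset α)) (i : α) : ℕ := (E.filter (fun e => i ∈ e)).card

/-- The action of the Laplacian tensor: `(L x^{k-1})_i`. -/
def lapAct (k : ℕ) (E : Finset (Finset α)) (x : α → ℝ) (i : α) : ℝ :=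
  (hdeg E i : ℝ) * x i ^ (k - 1) - ∑ e ∈ E.filter (fun e => i ∈ e), ∏ j ∈ e.erase i, x j

/-- The action of the signless Laplacian tensor: `(Q x^{k-1})_i`. -/
def signAct (k : ℕ) (E : Finset (Finset α)) (x : α → ℝ) (i : α) : ℝ :=
  (hdeg E i : ℝ) * x i ^ (k - 1) + ∑ e ∈ E.filter (fun e => i ∈ e), ∏ j ∈ e.erase i, x j

/-- The action of the adjacency tensor: `(A x^{k-1})_i`. -/
def adjAct (E : Finset (Finset α)) (x : α → ℝ) (i : α) : ℝ :=
  ∑ e ∈ E.filter (fun e => i ∈ e), ∏ j ∈ e.erase i, x j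

/-- `lam` is an H-eigenvalue of the Laplacian tensor. -/
def IsLapEig (k : ℕ) (E : Finset (Finset α)) (lam : ℝ) : Prop :=
  ∃ x : α → ℝ, x ≠ 0 ∧ ∀ i, lapAct k E x i = lam * x i ^ (k - 1)

/-- `lam` is the largest H-eigenvalue of the Laplacian tensor. -/
def IsLargestLapEig (k : ℕ) (E : Finset (Finset α)) (lam : ℝ) : Prop :=
  IsLapEig k E lam ∧ ∀ mu : ℝ, IsLapEig k E mu → mu ≤ lam

/-- `lam` is an H-eigenvalue of the signless Laplacian tensor. -/
def IsSignEig (k : ℕ) (E : Finset (Finset α)) (lam : ℝ) : Prop :=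
  ∃ x : α → ℝ, x ≠ 0 ∧ ∀ i, signAct k E x i = lam * x i ^ (k - 1)

/-- `lam` is the largest H-eigenvalue of the signless Laplacian tensor. -/
def IsLargestSignEig (k : ℕ) (E : Finset (Finset α)) (lam : ℝ) : Prop :=
  IsSignEig k E lam ∧ ∀ mu : ℝ, IsSignEig k E mu → mu ≤ lam

/-- `lam` is an H-eigenvalue of the adjacency tensor. -/
def IsAdjEig (k : ℕ) (E : Finset (Finset α)) (lam : ℝ) : Prop :=
  ∃ x : α → ℝ, x ≠ 0 ∧ ∀ i, adjAct E x i = lam * x i ^ (k - 1)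

/-- `lam` is the largest H-eigenvalue of the adjacency tensor. -/
def IsLargestAdjEig (k : ℕ) (E : Finset (Finset α)) (lam : ℝ) : Prop :=
  IsAdjEig k E lam ∧ ∀ mu : ℝ, IsAdjEig k E mu → mu ≤ lam

/-- `G = (V, E)` is a `k`-uniform hyperstar of size `d`: there is a heart `h` and a
disjoint partition of the remaining vertices into `d` parts of size `k-1`, the edges
being the heart together with one part. -/
def IsHyperstar (k d : ℕ) (E : Finset (Finset α)) : Prop :=
  ∃ (h : α) (P : Fin d → Finset α),
    (∀ i, h ∉ P i) ∧
    (∀ i, (P i).card = k - 1) ∧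
    (∀ i j, i ≠ j → Disjoint (P i) (P j)) ∧
    (∀ v : α, v ≠ h → ∃ i, v ∈ P i) ∧
    E = Finset.image (fun i => insert h (P i)) Finset.univ

/-- The hypergraph is connected: any two distinct vertices are joined by a chain of
pairwise intersecting edges. -/
def IsConnectedH (E : Finset (Finset α)) : Prop :=
  ∀ i j : α, i ≠ j → Relation.TransGen (fun a b : α => ∃ e ∈ E, a ∈ e ∧ b ∈ e) i j

/-- For `k` even: the hypergraph is odd-bipartite. -/
def IsOddBipartite [Fintype α] (E : Finset (Finset α)) : Prop :=
  E = ∅ ∨ ∃ V₁ : Finset α, V₁ ≠ ∅ ∧ V₁ ≠ Finset.univ ∧ ∀ e ∈ E, Odd (e ∩ V₁).card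

/-- `G = (V, E)` is a `k`-uniform hypercycle of size `s`. -/
def IsHypercycle (k : ℕ) (s : ℕ) [NeZero s] (E : Finset (Finset α)) : Prop :=
  ∃ P : Fin s → Finset α,
    (∀ i, (P i).card = k) ∧
    (∀ v : α, ∃ i, v ∈ P i) ∧
    E = Finset.image P Finset.univ ∧
    (∀ i : Fin s, (P i ∩ P (i + 1)).card = 1) ∧
    (∀ i j : Fin s, i ≠ j → j ≠ i + 1 → i ≠ j + 1 → P i ∩ P j = ∅) ∧
    Function.Injective (fun i : Fin s => P i ∩ P (i + 1))

/-!
A maximiser `x` of `tensorForm c k E` on the nonnegative part of the sphere `∑ xᵢᵏ = 1` exists by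
compactness and is an H-eigenvector with eigenvalue `max tensorForm`, by the coordinatewise Lagrange
condition. Conversely, for `c ≥ 0` every H-eigenvalue `μ` satisfies `|μ| ≤ max tensorForm`: apply
the tensor to `|y|`. Hence `λ(Q) = max tensorForm (hdeg E)` and `max tensorForm 0 ≤ λ(A)`.
Evaluating at the unit vector of a vertex of maximum degree and at the all-ones vector gives the
lower bounds, and `tensorForm (hdeg E) ≤ d ∑ xᵢᵏ + tensorForm 0` the upper one.
-/

open Function Filter Topology

namespace Hypergraph

variable {k : ℕ} {E : Finset (Finset α)}

lemma adjAct_nonneg {x : α → ℝ} (hx : 0 ≤ x) (i : α) : 0 ≤ adjAct E x i :=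
  sum_nonneg fun _ _ => prod_nonneg fun j _ => hx j

lemma abs_adjAct_le (x : α → ℝ) (i : α) : |adjAct E x i| ≤ adjAct E (fun j => |x j|) i :=
  (abs_sum_le_sum_abs _ _).trans_eq (sum_congr rfl fun _ _ => abs_prod _ _)

lemma exists_sum_prod_update (x : α → ℝ) (i : α) :
    ∃ R, ∀ u, ∑ e ∈ E, ∏ j ∈ e, update x i u j = adjAct E x i * u + R := by
  refine ⟨∑ e ∈ E with i ∉ e, ∏ j ∈ e, x j, fun u => ?_⟩
  rw [← sum_filter_add_sum_filter_not E (i ∈ ·), adjAct, sum_mul]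
  congr 1
  · refine sum_congr rfl fun e he => ?_
    rw [prod_update_of_mem (mem_filter.1 he).2, sdiff_singleton_eq_erase, mul_comm]
  · exact sum_congr rfl fun e he => prod_update_of_notMem (mem_filter.1 he).2 _ _

variable [Fintype α]

/-- `x ⬝ T x^{k-1}` for the tensor `T = diag c + A`; `c = hdeg E` gives `Q`, `c = 0` gives `A`. -/
noncomputable def tensorForm (c : α → ℝ) (k : ℕ) (E : Finset (Finset α)) (x : α → ℝ) : ℝ :=
  ∑ i, c i * x i ^ k + k * ∑ e ∈ E, ∏ j ∈ e, x j

noncomputable def powSum (k : ℕ) (x : α → ℝ) : ℝ := ∑ i, x i ^ k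

def nonnegSphere (k : ℕ) : Set (α → ℝ) := {x | 0 ≤ x ∧ powSum k x = 1}

lemma sum_mul_adjAct (hE : ∀ e ∈ E, #e = k) (x : α → ℝ) :
    ∑ i, x i * adjAct E x i = k * ∑ e ∈ E, ∏ j ∈ e, x j := by
  simp only [adjAct, mul_sum]
  rw [sum_comm' (t' := E) (s' := fun e => e) (fun i e => by simp [and_comm])]
  refine sum_congr rfl fun e he => ?_
  rw [sum_congr rfl fun i hi => mul_prod_erase e x hi, sum_const, hE e he, nsmul_eq_mul]

lemma tensorForm_eq_sum_mul (hk : k ≠ 0) (hE : ∀ e ∈ E, #e = k) (c x : α → ℝ) :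
    tensorForm c k E x = ∑ i, x i * (c i * x i ^ (k - 1) + adjAct E x i) := by
  simp only [mul_add, sum_add_distrib, sum_mul_adjAct hE, tensorForm]
  congr 1
  exact sum_congr rfl fun i _ => by rw [mul_left_comm, mul_pow_sub_one hk]

omit [DecidableEq α] in
lemma powSum_smul (t : ℝ) (x : α → ℝ) : powSum k (t • x) = t ^ k * powSum k x := by
  simp [powSum, mul_sum, mul_pow]

omit [DecidableEq α] in
lemma tensorForm_smul (hE : ∀ e ∈ E, #e = k) (c : α → ℝ) (t : ℝ) (x : α → ℝ) :
    tensorForm c k E (t • x) = t ^ k * tensorForm c k E x := by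
  have hdiag : ∑ i, c i * (t * x i) ^ k = t ^ k * ∑ i, c i * x i ^ k := by
    rw [mul_sum]
    exact sum_congr rfl fun i _ => by ring
  have hprod : ∀ e ∈ E, ∏ j ∈ e, t * x j = t ^ k * ∏ j ∈ e, x j := fun e he => by
    rw [prod_mul_distrib, prod_const, hE e he]
  simp only [tensorForm, Pi.smul_apply, smul_eq_mul]
  rw [hdiag, sum_congr rfl hprod, ← mul_sum]
  ring

omit [DecidableEq α] in
lemma continuous_tensorForm (c : α → ℝ) (k : ℕ) (E : Finset (Finset α)) :
    Continuous (tensorForm c k E) := by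
  unfold tensorForm
  fun_prop

omit [DecidableEq α] in
lemma pow_le_powSum {x : α → ℝ} (hx : 0 ≤ x) (i : α) : x i ^ k ≤ powSum k x :=
  single_le_sum (f := fun j => x j ^ k) (fun j _ => pow_nonneg (hx j) k) (mem_univ i)

omit [DecidableEq α] in
lemma powSum_pos {x : α → ℝ} (hx : 0 ≤ x) (hne : x ≠ 0) : 0 < powSum k x := by
  obtain ⟨i, hi⟩ := Function.ne_iff.1 hne
  exact (pow_pos ((hx i).lt_of_ne' hi) k).trans_le (pow_le_powSum hx i)

lemma powSum_single (hk : k ≠ 0) (i : α) : powSum k (Pi.single i 1) = 1 := by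
  simp [powSum, Pi.single_apply, hk]

omit [DecidableEq α] in
lemma ne_zero_of_mem_nonnegSphere (hk : k ≠ 0) {x : α → ℝ} (hx : x ∈ nonnegSphere k) : x ≠ 0 := by
  rintro rfl
  simpa [powSum, hk] using hx.2

omit [DecidableEq α] in
lemma isCompact_nonnegSphere (hk : k ≠ 0) : IsCompact (nonnegSphere (α := α) k) := by
  have hsub : nonnegSphere k ⊆ Set.Icc (0 : α → ℝ) 1 := fun x ⟨hx0, hx1⟩ =>
    ⟨hx0, fun i => (pow_le_one_iff_of_nonneg (hx0 i) hk).1 (hx1 ▸ pow_le_powSum hx0 i)⟩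
  have hclosed : IsClosed (nonnegSphere (α := α) k) :=
    (isClosed_le continuous_const continuous_id).inter
      (isClosed_eq (by unfold powSum; fun_prop) continuous_const)
  exact isCompact_Icc.of_isClosed_subset hclosed hsub

lemma nonnegSphere_nonempty [Nonempty α] (hk : k ≠ 0) : (nonnegSphere (α := α) k).Nonempty :=
  ⟨Pi.single (Classical.arbitrary α) 1, Pi.single_nonneg.2 zero_le_one, powSum_single hk _⟩

variable {c : α → ℝ}

omit [DecidableEq α] in
lemma tensorForm_le_mul_powSum (hk : k ≠ 0) (hE : ∀ e ∈ E, #e = k) {x y : α → ℝ}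
    (hmax : IsMaxOn (tensorForm c k E) (nonnegSphere k) x) (hy : 0 ≤ y) :
    tensorForm c k E y ≤ tensorForm c k E x * powSum k y := by
  rcases eq_or_ne y 0 with rfl | hne
  · have h0 := tensorForm_smul hE c 0 0
    rw [zero_smul, zero_pow hk, zero_mul] at h0
    simp [h0, powSum, hk]
  set t := powSum k y ^ (k : ℝ)⁻¹
  have ht : t ^ k = powSum k y := Real.rpow_inv_natCast_pow (powSum_pos hy hne).le hk
  have htpos : 0 < t := Real.rpow_pos_of_pos (powSum_pos hy hne) _
  have hz : t⁻¹ • y ∈ nonnegSphere k :=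
    ⟨smul_nonneg (inv_nonneg.2 htpos.le) hy,
      by rw [powSum_smul, inv_pow, ht, inv_mul_cancel₀ (powSum_pos hy hne).ne']⟩
  calc tensorForm c k E y = t ^ k * tensorForm c k E (t⁻¹ • y) := by
        rw [← tensorForm_smul hE, smul_inv_smul₀ htpos.ne']
    _ ≤ t ^ k * tensorForm c k E x := by gcongr; exact hmax hz
    _ = tensorForm c k E x * powSum k y := by rw [ht, mul_comm]

lemma exists_sum_apply_update (g : α → ℝ → ℝ) (x : α → ℝ) (i : α) :
    ∃ R, ∀ u, ∑ j, g j (update x i u j) = g i u + R := by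
  refine ⟨∑ j ∈ {i}ᶜ, g j (x j), fun u => ?_⟩
  rw [Fintype.sum_eq_add_sum_compl i, update_self]
  congr 1
  exact sum_congr rfl fun j hj => by rw [update_of_ne (by simpa using hj)]

lemma exists_tensorForm_update (x : α → ℝ) (i : α) :
    ∃ R, ∀ u, tensorForm c k E (update x i u) = c i * u ^ k + k * adjAct E x i * u + R := by
  obtain ⟨R₁, h₁⟩ := exists_sum_apply_update (fun j v => c j * v ^ k) x i
  obtain ⟨R₂, h₂⟩ := exists_sum_prod_update (E := E) x i
  exact ⟨R₁ + k * R₂, fun u => by rw [tensorForm, h₁, h₂]; ring⟩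

/-- At an interior maximum the derivative vanishes; at `p = 0` the right derivative `k b` must be
`≤ 0`, which forces `b = 0` because `u ^ (k - 1)` vanishes to higher order. -/
lemma critical_point_of_isMaxOn_Ici (hk : 2 ≤ k) {a b p : ℝ} (hb : 0 ≤ b) (hp : 0 ≤ p)
    (hmax : IsMaxOn (fun u => a * u ^ k + k * b * u) (Set.Ici 0) p) :
    a * p ^ (k - 1) + b = 0 := by
  rcases hp.eq_or_lt with rfl | hp
  · suffices b ≤ 0 by simp [zero_pow (by omega : k - 1 ≠ 0), le_antisymm this hb]
    have hlim : Tendsto (fun u : ℝ => a * u ^ (k - 1) + k * b) (𝓝[>] 0) (𝓝 (k * b)) := by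
      refine ((by fun_prop : Continuous fun u : ℝ => a * u ^ (k - 1) + k * b).tendsto' 0 _ ?_
        ).mono_left nhdsWithin_le_nhds
      simp [zero_pow (by omega : k - 1 ≠ 0)]
    have hnonpos : ∀ᶠ u in 𝓝[>] (0 : ℝ), a * u ^ (k - 1) + k * b ≤ 0 := by
      filter_upwards [self_mem_nhdsWithin] with u (hu : 0 < u)
      have hu' := hmax (Set.mem_Ici.2 hu.le)
      simp only [zero_pow (by omega : k ≠ 0), mul_zero, add_zero] at hu'
      refine nonpos_of_mul_nonpos_left ?_ hu
      calc (a * u ^ (k - 1) + k * b) * u = a * u ^ k + k * b * u := by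
            rw [← mul_pow_sub_one (by omega : k ≠ 0) u]; ring
        _ ≤ 0 := hu'
    have := le_of_tendsto hlim hnonpos
    have hk0 : (0 : ℝ) < k := by exact_mod_cast (by omega : 0 < k)
    nlinarith
  · have hderiv : HasDerivAt (fun u => a * u ^ k + k * b * u)
        (a * (k * p ^ (k - 1)) + k * b * 1) p :=
      ((hasDerivAt_pow k p).const_mul a).add ((hasDerivAt_id p).const_mul (k * b))
    have h := (hmax.isLocalMax (Ici_mem_nhds hp)).hasDerivAt_eq_zero hderiv
    have hk0 : (k : ℝ) ≠ 0 := by exact_mod_cast (by omega : k ≠ 0)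
    have : (k : ℝ) * (a * p ^ (k - 1) + b) = 0 := by linear_combination h
    simpa [hk0] using this

/-- Lagrange condition: perturbing one coordinate of a maximiser `x` in the cone `x ≥ 0` and
renormalising cannot increase `tensorForm`. -/
lemma eigen_of_isMaxOn (hk : 2 ≤ k) (hE : ∀ e ∈ E, #e = k) {x : α → ℝ}
    (hx : x ∈ nonnegSphere k) (hmax : IsMaxOn (tensorForm c k E) (nonnegSphere k) x) (i : α) :
    c i * x i ^ (k - 1) + adjAct E x i = tensorForm c k E x * x i ^ (k - 1) := by
  set M := tensorForm c k E x
  obtain ⟨R, hR⟩ := exists_tensorForm_update (c := c) (k := k) (E := E) x i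
  obtain ⟨S, hS⟩ := exists_sum_apply_update (fun _ v => v ^ k) x i
  have hle : ∀ u, 0 ≤ u → (c i - M) * u ^ k + k * adjAct E x i * u + (R - M * S) ≤ 0 := by
    intro u hu
    have := tensorForm_le_mul_powSum (by omega) hE hmax (y := update x i u)
      (fun j => by
        rcases eq_or_ne j i with rfl | hj
        exacts [by simpa using hu, by simpa [hj] using hx.1 j])
    rw [hR, powSum, hS] at this
    linarith
  have heq : (c i - M) * x i ^ k + k * adjAct E x i * x i + (R - M * S) = 0 := by
    have h₁ := hR (x i)
    have h₂ := hS (x i)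
    rw [update_eq_self] at h₁ h₂
    rw [← powSum, hx.2] at h₂
    linear_combination M * h₂ - h₁
  have hcrit := critical_point_of_isMaxOn_Ici hk (adjAct_nonneg hx.1 i) (hx.1 i)
    (a := c i - M) (isMaxOn_iff.2 fun u hu => by linarith [hle u hu])
  linear_combination hcrit

theorem exists_isMaxOn_eigenvector [Nonempty α] (hk : 2 ≤ k) (hE : ∀ e ∈ E, #e = k)
    (c : α → ℝ) :
    ∃ x ∈ nonnegSphere k, IsMaxOn (tensorForm c k E) (nonnegSphere k) x ∧
      ∀ i, c i * x i ^ (k - 1) + adjAct E x i = tensorForm c k E x * x i ^ (k - 1) := by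
  have hk0 : k ≠ 0 := by omega
  obtain ⟨x, hx, hmax⟩ := (isCompact_nonnegSphere hk0).exists_isMaxOn
    (nonnegSphere_nonempty hk0) (continuous_tensorForm c k E).continuousOn
  exact ⟨x, hx, hmax, eigen_of_isMaxOn hk hE hx hmax⟩

/-- Perron–Frobenius type bound: `|y|` satisfies `|μ| |y|^{k-1} ≤ T |y|^{k-1}` entrywise. -/
lemma le_tensorForm_of_eigen (hk : k ≠ 0) (hE : ∀ e ∈ E, #e = k) (hc : 0 ≤ c) {x y : α → ℝ}
    (hmax : IsMaxOn (tensorForm c k E) (nonnegSphere k) x) (hy : y ≠ 0) {μ : ℝ}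
    (hμ : ∀ i, c i * y i ^ (k - 1) + adjAct E y i = μ * y i ^ (k - 1)) :
    μ ≤ tensorForm c k E x := by
  set z : α → ℝ := fun j => |y j|
  have hz : 0 ≤ z := fun j => abs_nonneg (y j)
  have hzi : ∀ i, |μ| * z i ^ (k - 1) ≤ c i * z i ^ (k - 1) + adjAct E z i := fun i =>
    calc |μ| * z i ^ (k - 1) = |c i * y i ^ (k - 1) + adjAct E y i| := by
          rw [hμ, abs_mul, abs_pow]
      _ ≤ |c i * y i ^ (k - 1)| + |adjAct E y i| := abs_add_le _ _
      _ ≤ c i * z i ^ (k - 1) + adjAct E z i := by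
          rw [abs_mul, abs_of_nonneg (hc i), abs_pow]
          gcongr
          exact abs_adjAct_le y i
  have hsum : |μ| * powSum k z ≤ tensorForm c k E x * powSum k z :=
    calc |μ| * powSum k z = ∑ i, z i * (|μ| * z i ^ (k - 1)) := by
          rw [powSum, mul_sum]
          exact sum_congr rfl fun i _ => by rw [mul_left_comm, mul_pow_sub_one hk]
      _ ≤ ∑ i, z i * (c i * z i ^ (k - 1) + adjAct E z i) :=
          sum_le_sum fun i _ => mul_le_mul_of_nonneg_left (hzi i) (hz i)
      _ = tensorForm c k E z := (tensorForm_eq_sum_mul hk hE c z).symm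
      _ ≤ tensorForm c k E x * powSum k z := tensorForm_le_mul_powSum hk hE hmax hz
  have hz0 : z ≠ 0 := fun h => hy (funext fun j => abs_eq_zero.1 (congrFun h j))
  exact (le_abs_self μ).trans (le_of_mul_le_mul_right hsum (powSum_pos hz hz0))

lemma tensorForm_single (hk : 2 ≤ k) (hE : ∀ e ∈ E, #e = k) (c : α → ℝ) (i : α) :
    tensorForm c k E (Pi.single i 1) = c i := by
  have hedge : ∀ e ∈ E, ∏ j ∈ e, (Pi.single i 1 : α → ℝ) j = 0 := fun e he => by
    obtain ⟨j, hj, hji⟩ := exists_mem_ne (s := e) (by rw [hE e he]; omega) i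
    exact prod_eq_zero hj (Pi.single_eq_of_ne hji 1)
  rw [tensorForm, sum_congr rfl hedge]
  simp [Pi.single_apply, zero_pow (by omega : k ≠ 0)]

omit [DecidableEq α] in
lemma tensorForm_one (c : α → ℝ) : tensorForm c k E 1 = ∑ i, c i + k * #E := by
  simp [tensorForm]

omit [DecidableEq α] in
lemma tensorForm_le_add_tensorForm_zero {D : ℝ} (hc : ∀ i, c i ≤ D) {x : α → ℝ} (hx : 0 ≤ x) :
    tensorForm c k E x ≤ D * powSum k x + tensorForm 0 k E x := by
  simp only [tensorForm, powSum, mul_sum, Pi.zero_apply, zero_mul, sum_const_zero, zero_add]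
  gcongr with i
  exacts [pow_nonneg (hx i) k, hc i]

lemma sum_hdeg (hE : ∀ e ∈ E, #e = k) : ∑ i, hdeg E i = k * #E := by
  have := sum_card_bipartiteAbove_eq_sum_card_bipartiteBelow (s := univ) (t := E) (· ∈ ·)
  simp only [bipartiteAbove, bipartiteBelow, filter_mem_eq_inter, univ_inter] at this
  rw [show ∑ i, hdeg E i = _ from this, sum_congr rfl hE, sum_const, smul_eq_mul, mul_comm]

end Hypergraph

open Hypergraph

theorem largest_sign_eig_bounds_general {n k d : ℕ} (hk : 3 ≤ k)
    (E : Finset (Finset (Fin n))) (hunif : ∀ e ∈ E, e.card = k)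
    (hdle : ∀ i, hdeg E i ≤ d) (hdmax : ∃ i, hdeg E i = d)
    (lamQ lamA : ℝ) (hQ : IsLargestSignEig k E lamQ) (hA : IsLargestAdjEig k E lamA) :
    max (d : ℝ) ((2 * ∑ i : Fin n, (hdeg E i : ℝ)) / (n : ℝ)) ≤ lamQ ∧
    lamQ ≤ lamA + (d : ℝ) := by
  obtain ⟨i₀, hi₀⟩ := hdmax
  have : Nonempty (Fin n) := ⟨i₀⟩
  have hk0 : k ≠ 0 := by omega
  have hsum : ∑ i, (hdeg E i : ℝ) = k * #E := by exact_mod_cast sum_hdeg hunif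
  set deg : Fin n → ℝ := fun i => hdeg E i
  obtain ⟨x, hx, hxmax, hxeig⟩ := exists_isMaxOn_eigenvector (by omega) hunif deg
  obtain ⟨y, hy, hymax, hyeig⟩ := exists_isMaxOn_eigenvector (by omega) hunif (0 : Fin n → ℝ)
  obtain rfl : lamQ = tensorForm deg k E x := by
    obtain ⟨z, hz, hzeig⟩ := hQ.1
    exact le_antisymm (le_tensorForm_of_eigen hk0 hunif (fun i => Nat.cast_nonneg _) hxmax hz hzeig)
      (hQ.2 _ ⟨x, ne_zero_of_mem_nonnegSphere hk0 hx, hxeig⟩)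
  have hlamA : tensorForm 0 k E y ≤ lamA :=
    hA.2 _ ⟨y, ne_zero_of_mem_nonnegSphere hk0 hy, by simpa using hyeig⟩
  refine ⟨max_le ?_ ?_, ?_⟩
  · have h := tensorForm_le_mul_powSum hk0 hunif hxmax (y := Pi.single i₀ 1)
      (Pi.single_nonneg.2 zero_le_one)
    rw [tensorForm_single (by omega) hunif, powSum_single hk0, mul_one] at h
    rwa [← hi₀]
  · have h := tensorForm_le_mul_powSum hk0 hunif hxmax (zero_le_one (α := Fin n → ℝ))
    rw [tensorForm_one, hsum, show powSum k (1 : Fin n → ℝ) = n by simp [powSum]] at h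
    rw [div_le_iff₀ (by exact_mod_cast Fin.pos i₀)]
    linarith
  · calc tensorForm deg k E x ≤ d * powSum k x + tensorForm 0 k E x :=
          tensorForm_le_add_tensorForm_zero (fun i => Nat.cast_le.2 (hdle i)) hx.1
      _ ≤ d * powSum k x + tensorForm 0 k E y * powSum k x := by
          gcongr
          exact tensorForm_le_mul_powSum hk0 hunif hymax hx.1
      _ ≤ lamA + d := by rw [hx.2]; linarith

/-- For a `k`-uniform hypergraph with maximum degree `d > 0`, adjacency
tensor `A` and signless Laplacian tensor `Q`,
`max {d, 2·(Σᵢ dᵢ)/n} ≤ λ(Q) ≤ λ(A) + d`. -/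
theorem largest_sign_eig_bounds {n k d : ℕ} (hk : 3 ≤ k) (hkn : k ≤ n)
    (E : Finset (Finset (Fin n))) (hunif : ∀ e ∈ E, e.card = k)
    (hdle : ∀ i, hdeg E i ≤ d) (hdmax : ∃ i, hdeg E i = d) (hd : 0 < d)
    (lamQ lamA : ℝ) (hQ : IsLargestSignEig k E lamQ) (hA : IsLargestAdjEig k E lamA) :
    max (d : ℝ) ((2 * ∑ i : Fin n, (hdeg E i : ℝ)) / (n : ℝ)) ≤ lamQ ∧
    lamQ ≤ lamA + (d : ℝ) :=
  largest_sign_eig_bounds_general hk E hunif hdle hdmax lamQ lamA hQ hA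
end

section
/- Let G=(V,E) be a k-uniform hypergraph on n vertices and let G' be a sub-hypergraph of G, with signless Laplacian tensors Q and Q' respectively. Then λ(Q') ≤ λ(Q); if moreover G' and G are both connected, then λ(Q')=λ(Q) if and only if G'=G. Consequently, λ(Q) ≤ 2·C(n−1,k−1), with equality holding if and only if G is the k-uniform complete hypergraph on n vertices. -/
/-!
`λ(Q)` is the maximum of the form `Q z^k = ∑ᵢ dᵢ zᵢ^k + k ∑ₑ ∏_{j ∈ e} z_j` over nonnegative `z`
with `∑ᵢ zᵢ^k = 1`: a maximizer satisfies the eigen-equation (first-order conditions at positive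
coordinates; at zero coordinates because a maximizer cannot vanish on only part of an edge), and
any eigenpair `(μ, x)` gives `|μ| ∑ |xᵢ|^k ≤ Q |x|^k`.

Extending a maximizer for `G'` by zero shows `λ(Q') ≤ λ(Q)`. If equality holds, the extension
maximizes the form of `G`, so it is positive when `G` is connected, which forces `S = V`.

At a largest coordinate `v` of a maximizer, `λ z_v^{k-1} = d_v z_v^{k-1} + ∑_{e ∋ v} ∏_{e - v} z
≤ 2 d_v z_v^{k-1} ≤ 2 C(n-1,k-1) z_v^{k-1}`. Equality forces `d_v = C(n-1,k-1)` and `z` constant on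
the edges through `v`; as every vertex then shares an edge with `v`, `z` is constant and every
vertex has full degree, i.e. `G` is complete.
-/

open Finset

variable {α : Type*} [DecidableEq α]

open Filter Topology

section Sphere

variable {β : Type*} [Fintype β] {k : ℕ}

noncomputable def powSum (k : ℕ) (z : β → ℝ) : ℝ := ∑ i, z i ^ k

def nonnegSphere (k : ℕ) : Set (β → ℝ) := {z | (∀ i, 0 ≤ z i) ∧ powSum k z = 1}

lemma powSum_pos {z : β → ℝ} (hz : ∀ i, 0 ≤ z i) (hne : z ≠ 0) : 0 < powSum k z := by
  obtain ⟨i, hi⟩ := Function.ne_iff.mp hne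
  exact (pow_pos ((hz i).lt_of_ne' hi) k).trans_le
    (single_le_sum (fun j _ => pow_nonneg (hz j) k) (mem_univ i))

lemma powSum_smul (s : ℝ) (z : β → ℝ) : powSum k (s • z) = s ^ k * powSum k z := by
  simp only [powSum, Pi.smul_apply, smul_eq_mul, mul_pow, mul_sum]

lemma ne_zero_of_mem_nonnegSphere (hk : k ≠ 0) {z : β → ℝ} (hz : z ∈ nonnegSphere k) :
    z ≠ 0 := by
  rintro rfl
  simpa [powSum, zero_pow hk] using hz.2

lemma exists_pos_forall_le {z : β → ℝ} (hz : ∀ i, 0 ≤ z i) (hne : z ≠ 0) :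
    ∃ v, 0 < z v ∧ ∀ j, z j ≤ z v := by
  obtain ⟨i, hi⟩ := Function.ne_iff.mp hne
  have : Nonempty β := ⟨i⟩
  obtain ⟨v, hv⟩ := Finite.exists_max z
  exact ⟨v, ((hz i).lt_of_ne' hi).trans_le (hv i), hv⟩

lemma isCompact_nonnegSphere (hk : k ≠ 0) : IsCompact (nonnegSphere (β := β) k) := by
  have hclosed : IsClosed (nonnegSphere (β := β) k) := by
    simp only [nonnegSphere, Set.ofPred_and, Set.ofPred_forall]
    exact (isClosed_iInter fun i => isClosed_le continuous_const (continuous_apply i)).inter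
      (isClosed_eq (by unfold powSum; fun_prop) continuous_const)
  refine (isCompact_Icc (a := 0) (b := 1)).of_isClosed_subset hclosed
    fun z hz => ⟨hz.1, fun i => ?_⟩
  refine (pow_le_one_iff_of_nonneg (hz.1 i) hk).mp (hz.2 ▸ ?_)
  exact single_le_sum (fun j _ => pow_nonneg (hz.1 j) k) (mem_univ i)

lemma nonnegSphere_nonempty [DecidableEq β] [Nonempty β] (hk : k ≠ 0) :
    (nonnegSphere (β := β) k).Nonempty := by
  obtain ⟨b⟩ := ‹Nonempty β›
  refine ⟨Pi.single b 1, fun i => ?_, ?_⟩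
  · by_cases h : i = b <;> simp [h]
  · simp [powSum, Pi.single_apply, ite_pow, zero_pow hk]

lemma powSum_subtype {S : Finset β} (hk : k ≠ 0) {x : β → ℝ} (hx : ∀ i ∉ S, x i = 0) :
    powSum k (fun i : S => x i) = powSum k x := by
  rw [powSum, powSum, sum_coe_sort S (fun i => x i ^ k)]
  exact sum_subset (subset_univ S) fun i _ hi => by rw [hx i hi, zero_pow hk]

end Sphere

section SignForm

variable {β : Type*} [DecidableEq β] {k : ℕ} {E : Finset (Finset β)}

lemma signAct_eq_add_adjAct (x : β → ℝ) (i : β) :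
    signAct k E x i = hdeg E i * x i ^ (k - 1) + adjAct E x i := rfl

variable [Fintype β]

/-- For `k`-uniform `E` this is `Q z^k = ∑ i, z i * (Q z^{k-1})_i` (`sum_mul_signAct`). -/
noncomputable def signForm (k : ℕ) (E : Finset (Finset β)) (z : β → ℝ) : ℝ :=
  ∑ i, (hdeg E i : ℝ) * z i ^ k + k * ∑ e ∈ E, ∏ j ∈ e, z j

lemma sum_mul_signAct (hk : k ≠ 0) (hunif : ∀ e ∈ E, e.card = k) (z : β → ℝ) :
    ∑ i, z i * signAct k E z i = signForm k E z := by
  have hvertex : ∀ i, z i * signAct k E z i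
      = hdeg E i * z i ^ k + ∑ e ∈ E, if i ∈ e then ∏ j ∈ e, z j else 0 := by
    intro i
    rw [signAct, mul_add, ← sum_filter, mul_sum, mul_left_comm, mul_pow_sub_one hk]
    congr 1
    exact sum_congr rfl fun e he => mul_prod_erase e z (mem_filter.mp he).2
  simp only [hvertex, sum_add_distrib, signForm, add_right_inj]
  rw [sum_comm, mul_sum]
  refine sum_congr rfl fun e he => ?_
  rw [sum_ite_mem, univ_inter, sum_const, hunif e he, nsmul_eq_mul]

lemma signForm_smul (hunif : ∀ e ∈ E, e.card = k) (s : ℝ) (z : β → ℝ) :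
    signForm k E (s • z) = s ^ k * signForm k E z := by
  have hedge : ∀ e ∈ E, ∏ j ∈ e, s * z j = s ^ k * ∏ j ∈ e, z j := fun e he => by
    rw [prod_mul_distrib, prod_const, hunif e he]
  simp only [signForm, Pi.smul_apply, smul_eq_mul, mul_pow, mul_left_comm, sum_congr rfl hedge,
    ← mul_sum, mul_add]

lemma exists_isMaxOn_signForm [Nonempty β] (hk : k ≠ 0) :
    ∃ z ∈ nonnegSphere k, IsMaxOn (signForm k E) (nonnegSphere k) z :=
  (isCompact_nonnegSphere hk).exists_isMaxOn (nonnegSphere_nonempty hk)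
    (by unfold signForm; fun_prop)

variable {z : β → ℝ}

lemma signForm_le_mul_powSum (hk : k ≠ 0) (hunif : ∀ e ∈ E, e.card = k)
    (hmax : IsMaxOn (signForm k E) (nonnegSphere k) z) {w : β → ℝ} (hw : ∀ i, 0 ≤ w i) :
    signForm k E w ≤ signForm k E z * powSum k w := by
  rcases eq_or_ne w 0 with rfl | hne
  · have hzero : ((0 : ℝ) • (0 : β → ℝ)) = 0 := smul_zero _
    rw [← hzero, signForm_smul hunif, powSum_smul, zero_pow hk]
    simp
  have hs : 0 < powSum k w := powSum_pos hw hne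
  set r := powSum k w ^ (k : ℝ)⁻¹
  have hr : 0 < r := Real.rpow_pos_of_pos hs _
  have hrk : r ^ k = powSum k w := Real.rpow_inv_natCast_pow hs.le hk
  have hu : r⁻¹ • w ∈ nonnegSphere k :=
    ⟨fun i => mul_nonneg (inv_nonneg.mpr hr.le) (hw i),
      by rw [powSum_smul, inv_pow, hrk, inv_mul_cancel₀ hs.ne']⟩
  calc signForm k E w = r ^ k * signForm k E (r⁻¹ • w) := by
        rw [← signForm_smul hunif, smul_inv_smul₀ hr.ne']
    _ ≤ r ^ k * signForm k E z := mul_le_mul_of_nonneg_left (hmax hu) (by positivity)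
    _ = signForm k E z * powSum k w := by rw [hrk, mul_comm]

lemma abs_le_signForm_of_isSignEig (hk : k ≠ 0) (hunif : ∀ e ∈ E, e.card = k)
    (hmax : IsMaxOn (signForm k E) (nonnegSphere k) z) {μ : ℝ} (hμ : IsSignEig k E μ) :
    |μ| ≤ signForm k E z := by
  obtain ⟨x, hx, hxμ⟩ := hμ
  set y : β → ℝ := fun i => |x i|
  have hy0 : ∀ i, 0 ≤ y i := fun i => abs_nonneg _
  have hy : y ≠ 0 := fun h => hx (funext fun i => abs_eq_zero.mp (congrFun h i))
  have hpt : ∀ i, |μ| * y i ^ (k - 1) ≤ signAct k E y i := fun i => by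
    calc |μ| * y i ^ (k - 1) = |signAct k E x i| := by rw [hxμ, abs_mul, abs_pow]
      _ ≤ |hdeg E i * x i ^ (k - 1)| + ∑ e ∈ E.filter (fun e => i ∈ e), |∏ j ∈ e.erase i, x j| :=
          (abs_add_le _ _).trans (add_le_add_right (abs_sum_le_sum_abs _ _) _)
      _ = signAct k E y i := by simp only [signAct, abs_mul, abs_pow, Nat.abs_cast, abs_prod, y]
  have hbound : |μ| * powSum k y ≤ signForm k E z * powSum k y :=
    calc |μ| * powSum k y = ∑ i, y i * (|μ| * y i ^ (k - 1)) := by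
          simp only [powSum, mul_sum, mul_left_comm _ |μ|, mul_pow_sub_one hk]
      _ ≤ ∑ i, y i * signAct k E y i :=
          sum_le_sum fun i _ => mul_le_mul_of_nonneg_left (hpt i) (hy0 i)
      _ = signForm k E y := sum_mul_signAct hk hunif y
      _ ≤ signForm k E z * powSum k y := signForm_le_mul_powSum hk hunif hmax hy0
  exact le_of_mul_le_mul_right hbound (powSum_pos hy0 hy)

end SignForm

section Perturbation

variable {β : Type*} [Fintype β] [DecidableEq β] {k : ℕ} {E : Finset (Finset β)}

lemma sum_apply_update (g : β → ℝ → ℝ) (z : β → ℝ) (i : β) (a : ℝ) :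
    ∑ j, g j (Function.update z i a j) = ∑ j, g j (z j) + (g i a - g i (z i)) := by
  rw [← add_sum_erase _ _ (mem_univ i), ← add_sum_erase _ _ (mem_univ i), Function.update_self,
    sum_congr rfl fun j hj => by rw [Function.update_of_ne (ne_of_mem_erase hj)]]
  ring

lemma powSum_update (z : β → ℝ) (i : β) (a : ℝ) :
    powSum k (Function.update z i a) = powSum k z + (a ^ k - z i ^ k) :=
  sum_apply_update (fun _ x => x ^ k) z i a

lemma signForm_update (z : β → ℝ) (i : β) (a : ℝ) :
    signForm k E (Function.update z i a)
      = signForm k E z + hdeg E i * (a ^ k - z i ^ k) + k * ((a - z i) * adjAct E z i) := by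
  have hedge : ∀ e : Finset β, ∏ j ∈ e, Function.update z i a j
      = ∏ j ∈ e, z j + if i ∈ e then (a - z i) * ∏ j ∈ e.erase i, z j else 0 := by
    intro e
    split_ifs with hie
    · rw [prod_update_of_mem hie, ← mul_prod_erase e z hie, sdiff_singleton_eq_erase]
      ring
    · rw [prod_update_of_notMem hie, add_zero]
  have hedges : ∑ e ∈ E, ∏ j ∈ e, Function.update z i a j
      = ∑ e ∈ E, ∏ j ∈ e, z j + (a - z i) * adjAct E z i := by
    rw [sum_congr rfl fun e _ => hedge e, sum_add_distrib, ← sum_filter, adjAct, mul_sum]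
  rw [signForm, signForm, hedges,
    sum_apply_update (fun j x => (hdeg E j : ℝ) * x ^ k) z i a]
  ring

lemma powSum_piecewise_of_eq_zero (hk : k ≠ 0) {z : β → ℝ} {D : Finset β}
    (hzD : ∀ j ∈ D, z j = 0) (t : ℝ) :
    powSum k (D.piecewise (fun _ => t) z) = powSum k z + #D * t ^ k := by
  have hpt : ∀ j, D.piecewise (fun _ => t) z j ^ k = z j ^ k + if j ∈ D then t ^ k else 0 :=
    fun j => by
      by_cases hj : j ∈ D
      · rw [piecewise_eq_of_mem _ _ _ hj, hzD j hj, if_pos hj, zero_pow hk, zero_add]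
      · rw [piecewise_eq_of_notMem _ _ _ hj, if_neg hj, add_zero]
  rw [powSum, sum_congr rfl fun j _ => hpt j, sum_add_distrib, sum_ite_mem, univ_inter,
    sum_const, nsmul_eq_mul, ← powSum]

lemma hasDerivAt_const_add_pow (a : ℝ) (k : ℕ) :
    HasDerivAt (fun t => (a + t) ^ k) (k * a ^ (k - 1)) 0 := by
  simpa using (hasDerivAt_pow k (a + 0)).comp_const_add a 0

lemma hasDerivAt_powSum_update (z : β → ℝ) (i : β) :
    HasDerivAt (fun t => powSum k (Function.update z i (z i + t))) (k * z i ^ (k - 1)) 0 := by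
  simp only [powSum_update]
  exact ((hasDerivAt_const_add_pow (z i) k).sub_const _).const_add _ |>.congr_deriv (by ring)

lemma hasDerivAt_signForm_update (z : β → ℝ) (i : β) :
    HasDerivAt (fun t => signForm k E (Function.update z i (z i + t))) (k * signAct k E z i) 0 := by
  simp only [signForm_update, add_sub_cancel_left]
  exact (((hasDerivAt_const_add_pow (z i) k).sub_const _).const_mul _ |>.const_add _).add
    ((hasDerivAt_mul_const _).const_mul _) |>.congr_deriv (by rw [signAct_eq_add_adjAct]; ring)

end Perturbation

lemma nonpos_of_forall_le_mul_pow {a b : ℝ} {m : ℕ} (hm : m ≠ 0)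
    (h : ∀ t > 0, a ≤ b * t ^ m) : a ≤ 0 := by
  have hlim : Tendsto (fun t : ℝ => b * t ^ m) (𝓝[>] 0) (𝓝 0) := by
    have := ((continuous_pow m).const_mul b).tendsto 0
    rw [zero_pow hm, mul_zero] at this
    exact this.mono_left nhdsWithin_le_nhds
  exact ge_of_tendsto hlim (eventually_nhdsWithin_of_forall h)

section Maximizer

variable {β : Type*} [Fintype β] [DecidableEq β] {k : ℕ} {E : Finset (Finset β)} {z : β → ℝ}

lemma signAct_eq_of_isMaxOn_of_pos (hk : k ≠ 0) (hunif : ∀ e ∈ E, e.card = k)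
    (hz : z ∈ nonnegSphere k) (hmax : IsMaxOn (signForm k E) (nonnegSphere k) z) {i : β}
    (hi : 0 < z i) : signAct k E z i = signForm k E z * z i ^ (k - 1) := by
  set c := signForm k E z
  have hloc : IsLocalMax
      (fun t => signForm k E (Function.update z i (z i + t))
        - c * powSum k (Function.update z i (z i + t))) 0 := by
    filter_upwards [Ioi_mem_nhds (neg_lt_zero.mpr hi)] with t ht
    have hw : ∀ j, 0 ≤ Function.update z i (z i + t) j := by
      intro j
      rcases eq_or_ne j i with rfl | hj
      · rw [Function.update_self]; linarith [Set.mem_Ioi.mp ht]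
      · rw [Function.update_of_ne hj]; exact hz.1 j
    simp only [add_zero, Function.update_eq_self, hz.2, mul_one]
    linarith [signForm_le_mul_powSum hk hunif hmax hw]
  have hderiv := hloc.hasDerivAt_eq_zero
    ((hasDerivAt_signForm_update z i).sub ((hasDerivAt_powSum_update z i).const_mul c))
  have hk' : (k : ℝ) ≠ 0 := Nat.cast_ne_zero.mpr hk
  have : (k : ℝ) * (signAct k E z i - c * z i ^ (k - 1)) = 0 := by linarith
  linarith [(mul_eq_zero.mp this).resolve_left hk']

lemma signForm_add_prod_le {w : β → ℝ} (hz : ∀ i, 0 ≤ z i) (hzw : ∀ i, z i ≤ w i)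
    {e : Finset β} (he : e ∈ E) :
    signForm k E z + k * (∏ j ∈ e, w j - ∏ j ∈ e, z j) ≤ signForm k E w := by
  have hvertex : ∑ i, (hdeg E i : ℝ) * z i ^ k ≤ ∑ i, (hdeg E i : ℝ) * w i ^ k :=
    sum_le_sum fun i _ => mul_le_mul_of_nonneg_left (pow_le_pow_left₀ (hz i) (hzw i) k)
      (Nat.cast_nonneg _)
  have hprod : ∀ f ∈ E, ∏ j ∈ f, z j ≤ ∏ j ∈ f, w j := fun f _ =>
    prod_le_prod (fun j _ => hz j) (fun j _ => hzw j)
  have hedge : ∑ f ∈ E, ∏ j ∈ f, z j + (∏ j ∈ e, w j - ∏ j ∈ e, z j)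
      ≤ ∑ f ∈ E, ∏ j ∈ f, w j := by
    have := sum_le_sum fun f (hf : f ∈ E.erase e) => hprod f (mem_of_mem_erase hf)
    rw [← add_sum_erase _ _ he, ← add_sum_erase _ _ he]
    linarith
  unfold signForm
  nlinarith [Nat.cast_nonneg (α := ℝ) k]

/-- Raising the `m < k` vanishing coordinates of `e` to `t > 0` gains `k t^m ∏_{z j ≠ 0} z j` in
the form but costs only `O(t^k)` through `powSum`, so a maximizer cannot vanish on only part of
an edge. -/
lemma eq_zero_of_mem_of_isMaxOn (hk : k ≠ 0) (hunif : ∀ e ∈ E, e.card = k)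
    (hz : z ∈ nonnegSphere k) (hmax : IsMaxOn (signForm k E) (nonnegSphere k) z)
    {e : Finset β} (he : e ∈ E) {j₀ : β} (hj₀ : j₀ ∈ e) (hzj₀ : z j₀ = 0) :
    ∀ j ∈ e, z j = 0 := by
  by_contra! hne
  set D := e.filter (fun j => z j = 0)
  set P := ∏ j ∈ e \ D, z j
  have hD : 0 < #D := card_pos.mpr ⟨j₀, mem_filter.mpr ⟨hj₀, hzj₀⟩⟩
  have hDk : #D < k := hunif e he ▸ card_lt_card (filter_ssubset.mpr hne)
  have hP : 0 < P := by
    refine prod_pos fun j hj => ?_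
    obtain ⟨hje, hjD⟩ := mem_sdiff.mp hj
    exact (hz.1 j).lt_of_ne' fun h => hjD (mem_filter.mpr ⟨hje, h⟩)
  have hzD : ∀ j ∈ D, z j = 0 := fun j hj => (mem_filter.mp hj).2
  have hbound : ∀ t > 0, k * P ≤ signForm k E z * #D * t ^ (k - #D) := by
    intro t ht
    set w := D.piecewise (fun _ => t) z
    have hzw : ∀ j, z j ≤ w j := fun j => by
      change z j ≤ D.piecewise _ z j
      by_cases hj : j ∈ D
      · rw [piecewise_eq_of_mem _ _ _ hj, hzD j hj]; exact ht.le
      · rw [piecewise_eq_of_notMem _ _ _ hj]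
    have hpow : powSum k w = 1 + #D * t ^ k := by
      rw [powSum_piecewise_of_eq_zero hk hzD, hz.2]
    have hprod : ∏ j ∈ e, w j = t ^ #D * P := by
      rw [prod_piecewise, inter_eq_right.mpr (filter_subset _ _), prod_const]
    have hgain := signForm_add_prod_le (k := k) hz.1 hzw he
    rw [hprod, prod_eq_zero hj₀ hzj₀, sub_zero] at hgain
    have hle := signForm_le_mul_powSum hk hunif hmax (fun j => (hz.1 j).trans (hzw j))
    rw [hpow, ← pow_mul_pow_sub t hDk.le] at hle
    refine le_of_mul_le_mul_left ?_ (pow_pos ht #D)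
    linarith
  have := nonpos_of_forall_le_mul_pow (Nat.sub_ne_zero_of_lt hDk) hbound
  have : (0 : ℝ) < k * P := mul_pos (by positivity) hP
  linarith

lemma signAct_eq_of_isMaxOn (hk : 2 ≤ k) (hunif : ∀ e ∈ E, e.card = k)
    (hz : z ∈ nonnegSphere k) (hmax : IsMaxOn (signForm k E) (nonnegSphere k) z) (i : β) :
    signAct k E z i = signForm k E z * z i ^ (k - 1) := by
  rcases (hz.1 i).eq_or_lt with hi | hi
  · have hadj : adjAct E z i = 0 := sum_eq_zero fun e he => by
      obtain ⟨he, hie⟩ := mem_filter.mp he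
      obtain ⟨j, hj⟩ : (e.erase i).Nonempty := by
        rw [← card_pos, card_erase_of_mem hie, hunif e he]; omega
      exact prod_eq_zero hj
        (eq_zero_of_mem_of_isMaxOn (by omega) hunif hz hmax he hie hi.symm j (mem_of_mem_erase hj))
    rw [signAct_eq_add_adjAct, hadj, ← hi, zero_pow (by omega)]
    ring
  · exact signAct_eq_of_isMaxOn_of_pos (by omega) hunif hz hmax hi

lemma IsLargestSignEig.exists_isMaxOn (hk : 2 ≤ k) (hunif : ∀ e ∈ E, e.card = k) {lam : ℝ}
    (hlam : IsLargestSignEig k E lam) :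
    ∃ z ∈ nonnegSphere k, IsMaxOn (signForm k E) (nonnegSphere k) z ∧ lam = signForm k E z := by
  obtain ⟨x, hx, -⟩ := hlam.1
  have : Nonempty β := ⟨(Function.ne_iff.mp hx).choose⟩
  obtain ⟨z, hz, hmax⟩ := exists_isMaxOn_signForm (E := E) (by omega : k ≠ 0)
  have heig : IsSignEig k E (signForm k E z) :=
    ⟨z, ne_zero_of_mem_nonnegSphere (by omega) hz, signAct_eq_of_isMaxOn hk hunif hz hmax⟩
  exact ⟨z, hz, hmax, le_antisymm
    ((le_abs_self lam).trans (abs_le_signForm_of_isSignEig (by omega) hunif hmax hlam.1))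
    (hlam.2 _ heig)⟩

lemma pos_of_isMaxOn_of_isConnectedH (hk : k ≠ 0) (hunif : ∀ e ∈ E, e.card = k)
    (hz : z ∈ nonnegSphere k) (hmax : IsMaxOn (signForm k E) (nonnegSphere k) z)
    (hconn : IsConnectedH E) (i : β) : 0 < z i := by
  obtain ⟨v, hv, -⟩ := exists_pos_forall_le hz.1 (ne_zero_of_mem_nonnegSphere hk hz)
  have hstep : ∀ a b, (∃ e ∈ E, a ∈ e ∧ b ∈ e) → 0 < z a → 0 < z b := by
    rintro a b ⟨e, he, ha, hb⟩ hza
    exact (hz.1 b).lt_of_ne fun hzb =>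
      hza.ne' (eq_zero_of_mem_of_isMaxOn hk hunif hz hmax he hb hzb.symm a ha)
  rcases eq_or_ne v i with rfl | hvi
  · exact hv
  have hpath := hconn v i hvi
  clear hvi
  induction hpath with
  | single h => exact hstep _ _ h hv
  | tail _ h ih => exact hstep _ _ h ih

end Maximizer

section Degree

variable {β : Type*} [DecidableEq β] {k : ℕ} {E : Finset (Finset β)}

lemma card_image_erase (i : β) :
    #((E.filter (fun e => i ∈ e)).image (fun e => e.erase i)) = hdeg E i :=
  card_image_of_injOn fun e₁ h₁ e₂ h₂ h => by
    rw [← insert_erase (mem_filter.mp h₁).2, ← insert_erase (mem_filter.mp h₂).2]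
    exact congrArg (insert i) h

variable [Fintype β]

lemma image_erase_subset_powersetCard (hunif : ∀ e ∈ E, e.card = k) (i : β) :
    (E.filter (fun e => i ∈ e)).image (fun e => e.erase i)
      ⊆ powersetCard (k - 1) (univ.erase i) := by
  intro s hs
  obtain ⟨e, he, rfl⟩ := mem_image.mp hs
  obtain ⟨heE, hie⟩ := mem_filter.mp he
  exact mem_powersetCard.mpr
    ⟨erase_subset_erase _ (subset_univ e), by rw [card_erase_of_mem hie, hunif e heE]⟩

lemma card_powersetCard_erase (i : β) :
    #(powersetCard (k - 1) (univ.erase i)) = (Fintype.card β - 1).choose (k - 1) := by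
  rw [card_powersetCard, card_erase_of_mem (mem_univ i), card_univ]

lemma hdeg_le_choose (hunif : ∀ e ∈ E, e.card = k) (i : β) :
    hdeg E i ≤ (Fintype.card β - 1).choose (k - 1) := by
  rw [← card_image_erase, ← card_powersetCard_erase i]
  exact card_le_card (image_erase_subset_powersetCard hunif i)

lemma hdeg_eq_choose_iff (hk : k ≠ 0) (hunif : ∀ e ∈ E, e.card = k) (i : β) :
    hdeg E i = (Fintype.card β - 1).choose (k - 1) ↔
      ∀ s : Finset β, s.card = k → i ∈ s → s ∈ E := by
  have hsub := image_erase_subset_powersetCard hunif i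
  rw [← card_image_erase, ← card_powersetCard_erase i]
  constructor
  · intro h s hs his
    have hmem : s.erase i ∈ (E.filter (fun e => i ∈ e)).image (fun e => e.erase i) := by
      rw [eq_of_subset_of_card_le hsub h.ge]
      exact mem_powersetCard.mpr
        ⟨erase_subset_erase _ (subset_univ s), by rw [card_erase_of_mem his, hs]⟩
    obtain ⟨e, he, hes⟩ := mem_image.mp hmem
    obtain ⟨heE, hie⟩ := mem_filter.mp he
    rwa [← insert_erase his, ← hes, insert_erase hie]
  · intro h
    refine le_antisymm (card_le_card hsub) (card_le_card fun b hb => ?_)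
    obtain ⟨hbsub, hbcard⟩ := mem_powersetCard.mp hb
    have hib : i ∉ b := fun hi => (mem_erase.mp (hbsub hi)).1 rfl
    have hcard : (insert i b).card = k := by rw [card_insert_of_notMem hib, hbcard]; omega
    exact mem_image.mpr ⟨insert i b,
      mem_filter.mpr ⟨h _ hcard (mem_insert_self i b), mem_insert_self i b⟩, erase_insert hib⟩

lemma isSignEig_powersetCard_univ [Nonempty β] (hk : k ≠ 0) :
    IsSignEig k (powersetCard k (univ : Finset β))
      (2 * (Fintype.card β - 1).choose (k - 1)) := by
  have hdeg : ∀ i, hdeg (powersetCard k (univ : Finset β)) i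
      = (Fintype.card β - 1).choose (k - 1) := fun i =>
    (hdeg_eq_choose_iff hk (fun e he => (mem_powersetCard.mp he).2) i).mpr
      fun s hs _ => mem_powersetCard.mpr ⟨subset_univ s, hs⟩
  refine ⟨1, one_ne_zero, fun i => ?_⟩
  simp only [signAct, Pi.one_apply, one_pow, mul_one, prod_const_one, sum_const, nsmul_eq_mul]
  rw [← hdeg i, two_mul]
  rfl

end Degree

section Bound

variable {β : Type*} [DecidableEq β] {k : ℕ} {E : Finset (Finset β)} {z : β → ℝ} {v : β}

lemma prod_erase_le_pow (hunif : ∀ e ∈ E, e.card = k) (hz : ∀ j, 0 ≤ z j)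
    (hv : ∀ j, z j ≤ z v) {e : Finset β} (he : e ∈ E.filter (fun e => v ∈ e)) :
    ∏ j ∈ e.erase v, z j ≤ z v ^ (k - 1) := by
  obtain ⟨heE, hve⟩ := mem_filter.mp he
  calc ∏ j ∈ e.erase v, z j ≤ ∏ _j ∈ e.erase v, z v :=
        prod_le_prod (fun j _ => hz j) (fun j _ => hv j)
    _ = z v ^ (k - 1) := by rw [prod_const, card_erase_of_mem hve, hunif e heE]

lemma adjAct_le_hdeg_mul_pow (hunif : ∀ e ∈ E, e.card = k) (hz : ∀ j, 0 ≤ z j)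
    (hv : ∀ j, z j ≤ z v) : adjAct E z v ≤ hdeg E v * z v ^ (k - 1) := by
  rw [hdeg, ← nsmul_eq_mul, ← sum_const]
  exact sum_le_sum fun e he => prod_erase_le_pow hunif hz hv he

lemma eq_of_adjAct_eq_hdeg_mul_pow (hunif : ∀ e ∈ E, e.card = k) (hz : ∀ j, 0 ≤ z j)
    (hv : ∀ j, z j ≤ z v) (hpos : 0 < z v) (heq : adjAct E z v = hdeg E v * z v ^ (k - 1))
    {e : Finset β} (he : e ∈ E) (hve : v ∈ e) : ∀ j ∈ e, z j = z v := by
  rw [hdeg, ← nsmul_eq_mul, ← sum_const] at heq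
  have hprod := (sum_eq_sum_iff_of_le fun e he => prod_erase_le_pow hunif hz hv he).mp heq e
    (mem_filter.mpr ⟨he, hve⟩)
  intro j hj
  by_contra hne
  rcases eq_or_ne j v with rfl | hjv
  · exact hne rfl
  have hfac : ∀ x ∈ e.erase v, 0 < z x := fun x hx =>
    (hz x).lt_of_ne' fun h0 => (pow_pos hpos (k - 1)).ne' (hprod ▸ prod_eq_zero hx h0)
  have hlt : ∏ x ∈ e.erase v, z x < ∏ _x ∈ e.erase v, z v :=
    prod_lt_prod hfac (fun x _ => hv x) ⟨j, mem_erase.mpr ⟨hjv, hj⟩, (hv j).lt_of_ne hne⟩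
  rw [prod_const, card_erase_of_mem hve, hunif e he, hprod] at hlt
  exact lt_irrefl _ hlt

variable [Fintype β]

lemma le_two_choose_of_signAct_eq (hunif : ∀ e ∈ E, e.card = k) (hz : ∀ j, 0 ≤ z j)
    (hne : z ≠ 0) {μ : ℝ} (heig : ∀ i, signAct k E z i = μ * z i ^ (k - 1)) :
    μ ≤ 2 * (Fintype.card β - 1).choose (k - 1) := by
  obtain ⟨v, hv, hvmax⟩ := exists_pos_forall_le hz hne
  have hadj := adjAct_le_hdeg_mul_pow hunif hz hvmax
  have hdv : (hdeg E v : ℝ) ≤ (Fintype.card β - 1).choose (k - 1) := by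
    exact_mod_cast hdeg_le_choose hunif v
  have hv' := heig v
  rw [signAct_eq_add_adjAct] at hv'
  refine le_of_mul_le_mul_right ?_ (pow_pos hv (k - 1))
  nlinarith [pow_pos hv (k - 1)]

lemma hdeg_eq_choose_of_signAct_eq_two_choose (hunif : ∀ e ∈ E, e.card = k)
    (hz : ∀ j, 0 ≤ z j) (hv : ∀ j, z j ≤ z v) (hpos : 0 < z v)
    (heig : signAct k E z v = 2 * (Fintype.card β - 1).choose (k - 1) * z v ^ (k - 1)) :
    hdeg E v = (Fintype.card β - 1).choose (k - 1) ∧ ∀ e ∈ E, v ∈ e → ∀ j ∈ e, z j = z v := by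
  have hadj := adjAct_le_hdeg_mul_pow hunif hz hv
  have hdv : (hdeg E v : ℝ) ≤ (Fintype.card β - 1).choose (k - 1) := by
    exact_mod_cast hdeg_le_choose hunif v
  have hp := pow_pos hpos (k - 1)
  rw [signAct_eq_add_adjAct] at heig
  have hdeg_eq : (hdeg E v : ℝ) = (Fintype.card β - 1).choose (k - 1) := by
    refine le_antisymm hdv (le_of_mul_le_mul_right ?_ hp)
    nlinarith
  refine ⟨by exact_mod_cast hdeg_eq, fun e he hve =>
    eq_of_adjAct_eq_hdeg_mul_pow hunif hz hv hpos ?_ he hve⟩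
  rw [hdeg_eq] at heig ⊢
  linarith

lemma eq_powersetCard_of_signAct_eq_two_choose (hk : 2 ≤ k) (hkn : k ≤ Fintype.card β)
    (hunif : ∀ e ∈ E, e.card = k) (hz : ∀ j, 0 ≤ z j) (hne : z ≠ 0)
    (heig : ∀ i, signAct k E z i = 2 * (Fintype.card β - 1).choose (k - 1) * z i ^ (k - 1)) :
    E = powersetCard k univ := by
  obtain ⟨v, hv, hvmax⟩ := exists_pos_forall_le hz hne
  obtain ⟨hdv, hconst⟩ := hdeg_eq_choose_of_signAct_eq_two_choose hunif hz hvmax hv (heig v)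
  have hsets := (hdeg_eq_choose_iff (by omega) hunif v).mp hdv
  -- every vertex shares an edge with `v`, so `z` is constant
  have hzu : ∀ u, z u = z v := by
    intro u
    have hvu : #{v, u} ≤ k := (card_le_two).trans hk
    obtain ⟨s, hvus, hs⟩ := exists_superset_card_eq hvu hkn
    exact hconst s (hsets s hs (hvus (mem_insert_self v {u}))) (hvus (mem_insert_self v {u})) u
      (hvus (mem_insert_of_mem (mem_singleton_self u)))
  refine Subset.antisymm (fun s hs => mem_powersetCard.mpr ⟨subset_univ s, hunif s hs⟩)
    fun s hs => ?_
  obtain ⟨-, hs⟩ := mem_powersetCard.mp hs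
  obtain ⟨u, hu⟩ := card_pos.mp (by omega : 0 < #s)
  have hdu := (hdeg_eq_choose_of_signAct_eq_two_choose hunif hz (fun j => hzu u ▸ hvmax j)
    (hzu u ▸ hv) (heig u)).1
  exact (hdeg_eq_choose_iff (by omega) hunif u).mp hdu s hs hu

end Bound

section Induced

variable {β : Type*} [DecidableEq β]

def inducedEdges (E : Finset (Finset β)) (S : Finset β) : Finset (Finset S) :=
  (E.filter (fun e => e ⊆ S)).image (fun e => e.subtype (fun x => x ∈ S))

variable {k : ℕ} {E : Finset (Finset β)} {S : Finset β}

lemma hdeg_mono {E₁ E₂ : Finset (Finset β)} (h : E₁ ⊆ E₂) (i : β) : hdeg E₁ i ≤ hdeg E₂ i :=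
  card_le_card (filter_subset_filter _ h)

lemma injOn_subtype_filter_subset :
    Set.InjOn (fun e : Finset β => e.subtype (fun x => x ∈ S)) ↑(E.filter (fun e => e ⊆ S)) :=
  fun e₁ h₁ e₂ h₂ h => by
    rw [← subtype_map_of_mem (mem_filter.mp h₁).2, ← subtype_map_of_mem (mem_filter.mp h₂).2]
    exact congrArg _ h

lemma card_eq_of_mem_inducedEdges (hunif : ∀ e ∈ E, e.card = k) :
    ∀ e ∈ inducedEdges E S, e.card = k := by
  intro e' he'
  obtain ⟨e, he, rfl⟩ := mem_image.mp he'
  obtain ⟨heE, heS⟩ := mem_filter.mp he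
  rw [card_subtype, filter_true_of_mem heS, hunif e heE]

lemma hdeg_inducedEdges (i : S) :
    hdeg (inducedEdges E S) i = hdeg (E.filter (fun e => e ⊆ S)) i := by
  rw [hdeg, hdeg, inducedEdges, filter_image, card_image_of_injOn]
  · simp only [mem_subtype]
  · exact injOn_subtype_filter_subset.mono fun e he => (mem_filter.mp he).1

lemma sum_prod_inducedEdges (x : β → ℝ) :
    ∑ e ∈ inducedEdges E S, ∏ j ∈ e, x j = ∑ e ∈ E.filter (fun e => e ⊆ S), ∏ j ∈ e, x j := by
  rw [inducedEdges, sum_image injOn_subtype_filter_subset]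
  refine sum_congr rfl fun e he => ?_
  conv_rhs => rw [← subtype_map_of_mem (mem_filter.mp he).2, prod_map]
  rfl

variable [Fintype β]

lemma exists_extend_mem_nonnegSphere (hk : k ≠ 0) {z : S → ℝ} (hz : z ∈ nonnegSphere k) :
    ∃ x : β → ℝ, x ∈ nonnegSphere k ∧ (fun i : S => x i) = z ∧ ∀ i ∉ S, x i = 0 := by
  set x : β → ℝ := fun i => if h : i ∈ S then z ⟨i, h⟩ else 0
  have hxz : (fun i : S => x i) = z := funext fun i => dif_pos i.2
  have hx0 : ∀ i ∉ S, x i = 0 := fun i hi => dif_neg hi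
  refine ⟨x, ⟨fun i => ?_, ?_⟩, hxz, hx0⟩
  · by_cases hi : i ∈ S
    · exact (dif_pos hi).trans_ge (hz.1 _)
    · exact (hx0 i hi).ge
  · rw [← powSum_subtype hk hx0, hxz, hz.2]

lemma signForm_inducedEdges_le {x : β → ℝ} (hx : ∀ i, 0 ≤ x i) :
    signForm k (inducedEdges E S) (fun i => x i) ≤ signForm k E x := by
  have hvertex : ∑ i : S, (hdeg (inducedEdges E S) i : ℝ) * x i ^ k
      ≤ ∑ i, (hdeg E i : ℝ) * x i ^ k := by
    simp only [hdeg_inducedEdges]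
    rw [sum_coe_sort S (fun i => (hdeg (E.filter (fun e => e ⊆ S)) i : ℝ) * x i ^ k)]
    refine (sum_le_sum fun i _ => ?_).trans (sum_le_sum_of_subset_of_nonneg (subset_univ S)
      fun i _ _ => mul_nonneg (Nat.cast_nonneg _) (pow_nonneg (hx i) k))
    exact mul_le_mul_of_nonneg_right (by exact_mod_cast hdeg_mono (filter_subset _ _) i)
      (pow_nonneg (hx i) k)
  have hedge : ∑ e ∈ E.filter (fun e => e ⊆ S), ∏ j ∈ e, x j ≤ ∑ e ∈ E, ∏ j ∈ e, x j :=
    sum_le_sum_of_subset_of_nonneg (filter_subset _ _) fun e _ _ => prod_nonneg fun j _ => hx j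
  rw [signForm, signForm, sum_prod_inducedEdges]
  have := mul_le_mul_of_nonneg_left hedge (Nat.cast_nonneg (α := ℝ) k)
  linarith

lemma signForm_inducedEdges_univ (x : β → ℝ) :
    signForm k (inducedEdges E univ) (fun i => x i) = signForm k E x := by
  have hall : E.filter (fun e => e ⊆ univ) = E := filter_true_of_mem fun e _ => subset_univ e
  simp only [signForm, hdeg_inducedEdges, sum_prod_inducedEdges, hall]
  rw [sum_coe_sort univ (fun i => (hdeg E i : ℝ) * x i ^ k)]

end Induced

/-- For a `k`-uniform hypergraph `G` on `n` vertices and the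
sub-hypergraph `G'` of `G` induced by `S`, with signless Laplacian tensors `Q`, `Q'`:
`λ(Q') ≤ λ(Q)`; if both are connected then `λ(Q') = λ(Q)` iff `G' = G`;
consequently `λ(Q) ≤ 2·C(n-1, k-1)`, with equality iff `G` is complete. -/
theorem largest_sign_eig_sub_hypergraph {n k : ℕ} (hk : 3 ≤ k) (hkn : k ≤ n)
    (E : Finset (Finset (Fin n))) (hunif : ∀ e ∈ E, e.card = k)
    (S : Finset (Fin n)) (E' : Finset (Finset {x : Fin n // x ∈ S}))
    (hE' : E' = (E.filter (fun e => e ⊆ S)).image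
      (fun e => e.subtype (fun x => x ∈ S)))
    (lamQ lamQ' : ℝ) (hQ : IsLargestSignEig k E lamQ)
    (hQ' : IsLargestSignEig k E' lamQ') :
    lamQ' ≤ lamQ ∧
    (IsConnectedH E' → IsConnectedH E → (lamQ' = lamQ ↔ S = Finset.univ)) ∧
    lamQ ≤ 2 * ((n - 1).choose (k - 1) : ℝ) ∧
    (lamQ = 2 * ((n - 1).choose (k - 1) : ℝ) ↔ E = Finset.univ.powersetCard k) := by
  have hk2 : 2 ≤ k := by omega
  subst hE'
  obtain ⟨z, hz, hzmax, rfl⟩ := hQ.exists_isMaxOn hk2 hunif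
  obtain ⟨z', hz', hz'max, rfl⟩ := hQ'.exists_isMaxOn hk2 (card_eq_of_mem_inducedEdges hunif)
  obtain ⟨x, hx, rfl, hxS⟩ := exists_extend_mem_nonnegSphere (by omega) hz'
  have hzeig := signAct_eq_of_isMaxOn hk2 hunif hz hzmax
  have hz0 := ne_zero_of_mem_nonnegSphere (by omega) hz
  have hmono := signForm_inducedEdges_le (k := k) (E := E) (S := S) hx.1
  have hbound := le_two_choose_of_signAct_eq hunif hz.1 hz0 hzeig
  rw [Fintype.card_fin] at hbound
  refine ⟨hmono.trans (hzmax hx), fun _ hconn => ⟨fun heq => ?_, fun hS => ?_⟩, hbound, ?_, ?_⟩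
  · have hxmax : IsMaxOn (signForm k E) (nonnegSphere k) x := fun w hw =>
      (hzmax hw).trans (heq ▸ hmono)
    exact eq_univ_of_forall fun i => by_contra fun hi =>
      (pos_of_isMaxOn_of_isConnectedH (by omega) hunif hx hxmax hconn i).ne' (hxS i hi)
  · subst hS
    refine le_antisymm (hmono.trans (hzmax hx)) ?_
    rw [← signForm_inducedEdges_univ]
    exact hz'max ⟨fun i => hz.1 i, by
      rw [powSum_subtype (by omega) fun i hi => absurd (mem_univ i) hi, hz.2]⟩
  · intro heq
    refine eq_powersetCard_of_signAct_eq_two_choose hk2 (by simpa using hkn) hunif hz.1 hz0 ?_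
    simpa [← heq] using hzeig
  · rintro rfl
    have : Nonempty (Fin n) := ⟨⟨0, by omega⟩⟩
    refine le_antisymm hbound (hQ.2 _ ?_)
    simpa using isSignEig_powersetCard_univ (β := Fin n) (k := k) (by omega)
end

section
/- Let G=(V,E) be a k-uniform regular connected hypergraph in which every vertex has degree d>0, and let Q be its signless Laplacian tensor. Then λ(Q) = 2d. -/
open Finset

variable {α : Type*} [DecidableEq α]

/-
The all-ones vector is an H-eigenvector of `Q` with eigenvalue `2d`. Conversely, evaluate an
eigenvalue equation `(μ - d) x_i^{k-1} = Σ_{e ∋ i} ∏_{j ∈ e \ i} x_j` at a coordinate `i` where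
`|x_i|` is maximal: each of the `d` products is bounded by `|x_i|^{k-1}`, so `|μ - d| ≤ d`.
-/

theorem signAct_eq_hdeg_mul_add_adjAct (k : ℕ) (E : Finset (Finset α)) (x : α → ℝ) (i : α) :
    signAct k E x i = hdeg E i * x i ^ (k - 1) + adjAct E x i := rfl

theorem signAct_one (k : ℕ) (E : Finset (Finset α)) (i : α) :
    signAct k E (fun _ => 1) i = 2 * hdeg E i := by
  simp only [signAct, one_pow, mul_one, prod_const_one, sum_const, nsmul_eq_mul, hdeg]
  ring

theorem isSignEig_two_mul_of_regular [Nonempty α] {k d : ℕ} {E : Finset (Finset α)}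
    (hreg : ∀ i, hdeg E i = d) : IsSignEig k E (2 * d) :=
  ⟨fun _ => 1, Function.ne_iff.mpr ⟨Classical.arbitrary α, one_ne_zero⟩,
    fun i => by rw [signAct_one, hreg, one_pow, mul_one]⟩

theorem abs_adjAct_le {k : ℕ} {E : Finset (Finset α)} (hunif : ∀ e ∈ E, e.card = k)
    {x : α → ℝ} {M : ℝ} (hM : ∀ j, |x j| ≤ M) (i : α) :
    |adjAct E x i| ≤ hdeg E i * M ^ (k - 1) := by
  calc |adjAct E x i|
      ≤ ∑ e ∈ E.filter (fun e => i ∈ e), ∏ j ∈ e.erase i, |x j| := by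
        rw [adjAct]
        refine (abs_sum_le_sum_abs _ _).trans_eq ?_
        simp only [abs_prod]
    _ ≤ ∑ e ∈ E.filter (fun e => i ∈ e), M ^ (k - 1) := by
        refine sum_le_sum fun e he => ?_
        rw [mem_filter] at he
        rw [← hunif e he.1, ← card_erase_of_mem he.2, ← prod_const]
        exact prod_le_prod (fun j _ => abs_nonneg _) fun j _ => hM j
    _ = hdeg E i * M ^ (k - 1) := by rw [sum_const, nsmul_eq_mul, hdeg]

theorem IsSignEig.exists_le_two_mul_hdeg [Finite α] {k : ℕ} {E : Finset (Finset α)} {μ : ℝ}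
    (hunif : ∀ e ∈ E, e.card = k) (hμ : IsSignEig k E μ) : ∃ i, μ ≤ 2 * hdeg E i := by
  obtain ⟨x, hx0, hxe⟩ := hμ
  obtain ⟨j₀, hj₀⟩ := Function.ne_iff.mp hx0
  have : Nonempty α := ⟨j₀⟩
  obtain ⟨i, hi⟩ := Finite.exists_max fun j => |x j|
  have hpow_pos : 0 < |x i| ^ (k - 1) :=
    pow_pos ((abs_pos.mpr hj₀).trans_le (hi j₀)) _
  have hbound : |μ - hdeg E i| * |x i| ^ (k - 1) ≤ hdeg E i * |x i| ^ (k - 1) := by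
    have heq : (μ - hdeg E i) * x i ^ (k - 1) = adjAct E x i := by
      linarith [hxe i, signAct_eq_hdeg_mul_add_adjAct k E x i]
    simpa only [← heq, abs_mul, abs_pow] using abs_adjAct_le hunif hi i
  refine ⟨i, ?_⟩
  linarith [(abs_le.mp (le_of_mul_le_mul_right hbound hpow_pos)).2]

theorem largest_sign_eig_regular_general {n k d : ℕ}
    (E : Finset (Finset (Fin n))) (hunif : ∀ e ∈ E, e.card = k)
    (hreg : ∀ i, hdeg E i = d)
    (lam : ℝ) (hlam : IsLargestSignEig k E lam) :
    lam = 2 * (d : ℝ) := by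
  obtain ⟨i, hi⟩ := hlam.1.exists_le_two_mul_hdeg hunif
  have : Nonempty (Fin n) := ⟨i⟩
  exact le_antisymm (hreg i ▸ hi) (hlam.2 _ (isSignEig_two_mul_of_regular hreg))

/-- For a `k`-uniform regular connected hypergraph in which every vertex
has degree `d > 0`, with signless Laplacian tensor `Q`, we have `λ(Q) = 2d`. -/
theorem largest_sign_eig_regular {n k d : ℕ} (hk : 3 ≤ k) (hkn : k ≤ n)
    (E : Finset (Finset (Fin n))) (hunif : ∀ e ∈ E, e.card = k)
    (hconn : IsConnectedH E) (hreg : ∀ i, hdeg E i = d) (hd : 0 < d)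
    (lam : ℝ) (hlam : IsLargestSignEig k E lam) :
    lam = 2 * (d : ℝ) :=
  largest_sign_eig_regular_general E hunif hreg lam hlam
end

section
/- Let G=(V,E) be a k-uniform hypercycle of size s>0 and let Q be its signless Laplacian tensor. Then the equation 2β^k+β^2−1=0 has a unique positive real solution β, this β lies in the interval (1/2,1), and λ(Q) = 2+2β^{k−2}. -/
open Finset

variable {α : Type*} [DecidableEq α]

/-!
Let `w i` be the vertex shared by consecutive edges `P i` and `P (i + 1)`. The vector equal to `1`
on these junctions and to `β` elsewhere is a positive H-eigenvector of `Q` with eigenvalue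
`2 + 2β^(k-2)` exactly when `2β^k + β^2 = 1`. As in Perron–Frobenius theory, the eigenvalue of a
positive eigenvector bounds `|μ|` for every H-eigenvalue `μ`: the eigenvalue equation gives
`|μ| |y|^(k-1) ≤ Q |y|^(k-1)`, and `Q` is monotone and `(k-1)`-homogeneous on nonnegative vectors.
-/

lemma exists_root_two_mul_pow_add_sq_sub_one {k : ℕ} (hk : 2 ≤ k) :
    ∃ b : ℝ, (0 < b ∧ 2 * b ^ k + b ^ 2 - 1 = 0) ∧
      (∀ c : ℝ, 0 < c → 2 * c ^ k + c ^ 2 - 1 = 0 → c = b) ∧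
      b ∈ Set.Ioo (1 / 2 : ℝ) 1 := by
  set f : ℝ → ℝ := fun b => 2 * b ^ k + b ^ 2 - 1
  have hmono : StrictMonoOn f (Set.Ici 0) := fun a ha b _ hab => by
    have := pow_lt_pow_left₀ hab ha (by omega : k ≠ 0)
    have := pow_lt_pow_left₀ hab ha two_ne_zero
    simp only [f]
    linarith
  have hhalf : f (1 / 2) < 0 := by
    have : (1 / 2 : ℝ) ^ k ≤ (1 / 2) ^ 2 := pow_le_pow_of_le_one (by norm_num) (by norm_num) hk
    simp only [f]
    linarith
  have hone : 0 < f 1 := by norm_num [f]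
  obtain ⟨b, hb, hfb⟩ :=
    intermediate_value_Ioo (by norm_num) (by fun_prop : Continuous f).continuousOn ⟨hhalf, hone⟩
  have hb0 : 0 < b := by linarith [hb.1]
  refine ⟨b, ⟨hb0, hfb⟩, fun c hc hfc => ?_, hb⟩
  exact hmono.injOn (Set.mem_Ici.2 hc.le) (Set.mem_Ici.2 hb0.le) (hfc.trans hfb.symm)

section SignlessLaplacian

variable {k : ℕ} {E : Finset (Finset α)}

lemma signAct_mono {x y : α → ℝ} (hx : 0 ≤ x) (hxy : x ≤ y) (i : α) :
    signAct k E x i ≤ signAct k E y i := by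
  unfold signAct
  gcongr with e _ j _
  · exact hx i
  · exact hxy i
  · exact fun j _ => hx j
  · exact hxy j

lemma signAct_smul (hE : ∀ e ∈ E, e.card = k) (t : ℝ) (x : α → ℝ) (i : α) :
    signAct k E (t • x) i = t ^ (k - 1) * signAct k E x i := by
  simp only [signAct, Pi.smul_apply, smul_eq_mul, mul_add, mul_sum]
  congr 1
  · ring
  · refine sum_congr rfl fun e he => ?_
    rw [mem_filter] at he
    rw [prod_mul_distrib, prod_const, card_erase_of_mem he.2, hE e he.1]

/-- Compare an eigenvector `y` with `t • x` for the least `t` such that `|y| ≤ t • x`, at a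
coordinate where equality holds. -/
theorem abs_le_of_isSignEig [Fintype α] (hE : ∀ e ∈ E, e.card = k) {x : α → ℝ}
    (hx : ∀ i, 0 < x i) {L : ℝ} (hL : ∀ i, signAct k E x i = L * x i ^ (k - 1)) {mu : ℝ}
    (hmu : IsSignEig k E mu) : |mu| ≤ L := by
  obtain ⟨y, hy0, hy⟩ := hmu
  obtain ⟨j, hj⟩ := Function.ne_iff.mp hy0
  obtain ⟨i, -, hmax⟩ := exists_max_image univ (fun i => |y i| / x i)
    ⟨j, mem_univ j⟩
  set t := |y i| / x i
  have hyi : |y i| = t * x i := (div_mul_cancel₀ _ (hx i).ne').symm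
  have hyi_pos : 0 < |y i| :=
    hyi ▸ mul_pos ((div_pos (abs_pos.mpr hj) (hx j)).trans_le (hmax j (mem_univ j))) (hx i)
  have hle : (fun j => |y j|) ≤ t • x := fun j =>
    (div_le_iff₀ (hx j)).mp (hmax j (mem_univ j))
  have hsub : |mu| * |y i| ^ (k - 1) ≤ signAct k E (fun j => |y j|) i := by
    rw [← abs_pow, ← abs_mul, ← hy i, signAct]
    refine (abs_add_le _ _).trans (add_le_add ?_ ?_)
    · rw [abs_mul, abs_pow, Nat.abs_cast]
    · refine (abs_sum_le_sum_abs _ _).trans_eq (sum_congr rfl fun e _ => ?_)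
      rw [abs_prod]
  have hkey : |mu| * |y i| ^ (k - 1) ≤ L * |y i| ^ (k - 1) :=
    calc |mu| * |y i| ^ (k - 1) ≤ signAct k E (fun j => |y j|) i := hsub
      _ ≤ signAct k E (t • x) i := signAct_mono (fun j => abs_nonneg (y j)) hle i
      _ = L * |y i| ^ (k - 1) := by rw [signAct_smul hE, hL, hyi, mul_pow]; ring
  exact le_of_mul_le_mul_right hkey (pow_pos hyi_pos _)

end SignlessLaplacian

lemma signAct_image_of_injective {ι : Type*} [Fintype ι] {k : ℕ} {P : ι → Finset α}
    (hP : Function.Injective P) (x : α → ℝ) (v : α) :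
    signAct k (univ.image P) x v =
      (#{i | v ∈ P i} : ℝ) * x v ^ (k - 1) + ∑ i with v ∈ P i, ∏ j ∈ (P i).erase v, x j := by
  rw [signAct, hdeg, filter_image, card_image_of_injective _ hP,
    sum_image fun _ _ _ _ h => hP h]

lemma prod_ite_mem_one (S J : Finset α) (b : ℝ) :
    ∏ j ∈ S, (if j ∈ J then 1 else b) = b ^ #(S \ J) := by
  rw [prod_ite, prod_const_one, one_mul, prod_const, filter_not, filter_mem_eq_inter,
    sdiff_inter_self_left]

namespace Hypercycle

variable {k s : ℕ} [NeZero s] {P : Fin s → Finset α}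

lemma succ_ne_self (hk : 2 ≤ k) (hcard : ∀ i, (P i).card = k)
    (hinter : ∀ i, (P i ∩ P (i + 1)).card = 1) (i : Fin s) : i + 1 ≠ i := fun h => by
  have := hinter i
  rw [h, inter_self, hcard] at this
  omega

lemma card_inter_le_one (hinter : ∀ i, (P i ∩ P (i + 1)).card = 1)
    (hdisj : ∀ i j, i ≠ j → j ≠ i + 1 → i ≠ j + 1 → P i ∩ P j = ∅) {i j : Fin s}
    (hij : i ≠ j) : #(P i ∩ P j) ≤ 1 := by
  by_cases hj : j = i + 1
  · exact hj ▸ (hinter i).le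
  by_cases hi : i = j + 1
  · exact hi ▸ inter_comm (P j) _ ▸ (hinter j).le
  simp [hdisj i j hij hj hi]

lemma injective (hk : 2 ≤ k) (hcard : ∀ i, (P i).card = k)
    (hinter : ∀ i, (P i ∩ P (i + 1)).card = 1)
    (hdisj : ∀ i j, i ≠ j → j ≠ i + 1 → i ≠ j + 1 → P i ∩ P j = ∅) :
    Function.Injective P := fun i j hij => by
  by_contra hne
  have := card_inter_le_one hinter hdisj hne
  rw [hij, inter_self, hcard] at this
  omega

lemma eq_succ_or_eq_succ_of_mem
    (hdisj : ∀ i j, i ≠ j → j ≠ i + 1 → i ≠ j + 1 → P i ∩ P j = ∅) {v : α} {i j : Fin s}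
    (hi : v ∈ P i) (hj : v ∈ P j) (hij : i ≠ j) : j = i + 1 ∨ i = j + 1 := by
  by_contra! h
  simpa [hdisj i j hij h.1 h.2] using mem_inter.mpr ⟨hi, hj⟩

variable {w : Fin s → α}

lemma mem_and_mem_succ_iff (hw : ∀ i, P i ∩ P (i + 1) = {w i}) {v : α} {i : Fin s} :
    v ∈ P i ∧ v ∈ P (i + 1) ↔ v = w i := by
  rw [← mem_inter, hw, mem_singleton]

lemma junction_mem_iff (hdisj : ∀ i j, i ≠ j → j ≠ i + 1 → i ≠ j + 1 → P i ∩ P j = ∅)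
    (hw : ∀ i, P i ∩ P (i + 1) = {w i}) (hw_inj : Function.Injective w) (i j : Fin s) :
    w i ∈ P j ↔ j = i ∨ j = i + 1 := by
  have hi := ((mem_and_mem_succ_iff hw).mpr rfl : w i ∈ P i ∧ _)
  refine ⟨fun hj => ?_, by rintro (rfl | rfl) <;> simp [hi]⟩
  by_contra! h
  rcases eq_succ_or_eq_succ_of_mem hdisj hi.1 hj h.1.symm with h' | rfl
  · exact h.2 h'
  · exact h.1 (hw_inj ((mem_and_mem_succ_iff hw).mp ⟨hj, hi.1⟩).symm)

lemma mem_iff_of_ne_junction (hdisj : ∀ i j, i ≠ j → j ≠ i + 1 → i ≠ j + 1 → P i ∩ P j = ∅)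
    (hw : ∀ i, P i ∩ P (i + 1) = {w i}) {v : α} (hv : v ∉ Set.range w) {i : Fin s}
    (hi : v ∈ P i) (j : Fin s) : v ∈ P j ↔ j = i := by
  refine ⟨fun hj => ?_, fun h => h ▸ hi⟩
  by_contra hji
  rcases eq_succ_or_eq_succ_of_mem hdisj hi hj (Ne.symm hji) with rfl | rfl
  · exact hv ⟨i, ((mem_and_mem_succ_iff hw).mp ⟨hi, hj⟩).symm⟩
  · exact hv ⟨j, ((mem_and_mem_succ_iff hw).mp ⟨hj, hi⟩).symm⟩

lemma card_sdiff_junctions (hk : 2 ≤ k) (hcard : ∀ i, (P i).card = k)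
    (hdisj : ∀ i j, i ≠ j → j ≠ i + 1 → i ≠ j + 1 → P i ∩ P j = ∅)
    (hw : ∀ i, P i ∩ P (i + 1) = {w i}) (hw_inj : Function.Injective w) (i : Fin s) :
    #(P i \ univ.image w) = k - 2 := by
  have hjunctions : univ.image w ∩ P i = {w (i - 1), w i} := by
    ext v
    simp only [mem_inter, mem_image, mem_univ, true_and, mem_insert, mem_singleton]
    constructor
    · rintro ⟨⟨j, rfl⟩, hj⟩
      rcases (junction_mem_iff hdisj hw hw_inj j i).mp hj with rfl | rfl
      · exact Or.inr rfl
      · exact Or.inl (by rw [add_sub_cancel_right])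
    · rintro (rfl | rfl)
      · exact ⟨⟨_, rfl⟩,
          (junction_mem_iff hdisj hw hw_inj _ i).mpr (Or.inr (sub_add_cancel i 1).symm)⟩
      · exact ⟨⟨_, rfl⟩, (junction_mem_iff hdisj hw hw_inj i i).mpr (Or.inl rfl)⟩
  have hne : w (i - 1) ≠ w i := fun h =>
    succ_ne_self hk hcard (fun j => by rw [hw, card_singleton]) (i - 1)
      (by rw [sub_add_cancel, hw_inj h])
  rw [card_sdiff, hjunctions, card_pair hne, hcard]

/-- At a vertex of degree 1 the equation reads `b ^ (k - 1) + b ^ (k - 3) = λ b ^ (k - 1)`,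
which for `λ = 2 + 2 b ^ (k - 2)` is the defining equation of `b`. -/
lemma signAct_junction_indicator (hk : 3 ≤ k) (hcard : ∀ i, (P i).card = k)
    (hcover : ∀ v : α, ∃ i, v ∈ P i)
    (hdisj : ∀ i j, i ≠ j → j ≠ i + 1 → i ≠ j + 1 → P i ∩ P j = ∅)
    (hw : ∀ i, P i ∩ P (i + 1) = {w i}) (hw_inj : Function.Injective w) {b : ℝ}
    (hb : 2 * b ^ k + b ^ 2 = 1) (v : α) :
    signAct k (univ.image P) (fun u => if u ∈ univ.image w then 1 else b) v =
      (2 + 2 * b ^ (k - 2)) * (if v ∈ univ.image w then 1 else b) ^ (k - 1) := by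
  have hinter i : (P i ∩ P (i + 1)).card = 1 := by rw [hw, card_singleton]
  rw [signAct_image_of_injective (injective (by omega) hcard hinter hdisj)]
  simp only [prod_ite_mem_one]
  by_cases hv : v ∈ univ.image w
  · obtain ⟨i, -, rfl⟩ := mem_image.mp hv
    have hedges : ({j | w i ∈ P j} : Finset (Fin s)) = {i, i + 1} := by
      ext j
      simp [junction_mem_iff hdisj hw hw_inj]
    have hsucc := (succ_ne_self (by omega) hcard hinter i).symm
    simp only [hedges, card_pair hsucc, sum_pair hsucc, erase_sdiff_comm,
      erase_eq_of_notMem (fun h => (mem_sdiff.mp h).2 hv),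
      card_sdiff_junctions (by omega) hcard hdisj hw hw_inj, if_pos hv]
    push_cast
    ring
  · obtain ⟨i, hi⟩ := hcover v
    have hv' : v ∉ Set.range w := fun ⟨j, hj⟩ => hv (hj ▸ mem_image_of_mem w (mem_univ j))
    have hedges : ({j | v ∈ P j} : Finset (Fin s)) = {i} := by
      ext j
      simp [mem_iff_of_ne_junction hdisj hw hv' hi]
    obtain ⟨m, rfl⟩ : ∃ m, k = m + 3 := ⟨k - 3, by omega⟩
    simp only [hedges, card_singleton, sum_singleton, erase_sdiff_comm,
      card_erase_of_mem (mem_sdiff.mpr ⟨hi, hv⟩),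
      card_sdiff_junctions (by omega) hcard hdisj hw hw_inj, if_neg hv]
    simp only [show m + 3 - 1 = m + 2 by omega, show m + 3 - 2 = m + 1 by omega,
      Nat.add_sub_cancel]
    linear_combination (-b ^ m) * hb

end Hypercycle

namespace IsHypercycle

variable {k s : ℕ} [NeZero s] {E : Finset (Finset α)}

lemma card_eq (h : IsHypercycle k s E) : ∀ e ∈ E, e.card = k := by
  obtain ⟨P, hcard, -, rfl, -⟩ := h
  simpa using hcard

lemma exists_pos_eigenvector (hk : 3 ≤ k) (h : IsHypercycle k s E) {b : ℝ} (hb0 : 0 < b)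
    (hb : 2 * b ^ k + b ^ 2 = 1) :
    ∃ x : α → ℝ, (∀ v, 0 < x v) ∧ x ≠ 0 ∧
      ∀ v, signAct k E x v = (2 + 2 * b ^ (k - 2)) * x v ^ (k - 1) := by
  obtain ⟨P, hcard, hcover, rfl, hinter, hdisj, hinj⟩ := h
  choose w hw using fun i => card_eq_one.mp (hinter i)
  have hw_inj : Function.Injective w := fun i j h => hinj (by simp only [hw, h])
  refine ⟨fun u => if u ∈ univ.image w then 1 else b, fun u => by positivity,
    Function.ne_iff.mpr ⟨w 0, by simp⟩,
    Hypercycle.signAct_junction_indicator hk hcard hcover hdisj hw hw_inj hb⟩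

end IsHypercycle

theorem largest_sign_eig_hypercycle_general {k s n : ℕ} [NeZero s] (hk : 3 ≤ k)
    (E : Finset (Finset (Fin n)))
    (hcyc : IsHypercycle k s E) (lam : ℝ) (hlam : IsLargestSignEig k E lam) :
    ∃ b : ℝ, (0 < b ∧ 2 * b ^ k + b ^ 2 - 1 = 0) ∧
      (∀ c : ℝ, 0 < c → 2 * c ^ k + c ^ 2 - 1 = 0 → c = b) ∧
      b ∈ Set.Ioo (1 / 2 : ℝ) 1 ∧
      lam = 2 + 2 * b ^ (k - 2) := by
  obtain ⟨b, ⟨hb0, hb⟩, huniq, hbIoo⟩ := exists_root_two_mul_pow_add_sq_sub_one (k := k) (by omega)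
  obtain ⟨x, hx_pos, hx_ne, hx⟩ := hcyc.exists_pos_eigenvector hk hb0 (by linarith)
  refine ⟨b, ⟨hb0, hb⟩, huniq, hbIoo, le_antisymm ?_ (hlam.2 _ ⟨x, hx_ne, hx⟩)⟩
  exact (le_abs_self lam).trans (abs_le_of_isSignEig hcyc.card_eq hx_pos hx hlam.1)

/-- For a `k`-uniform hypercycle of size `s > 0` with signless Laplacian
tensor `Q`, the equation `2β^k + β^2 - 1 = 0` has a unique positive real solution `β`,
this `β` lies in `(1/2, 1)`, and `λ(Q) = 2 + 2β^(k-2)`. -/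
theorem largest_sign_eig_hypercycle {k s n : ℕ} [NeZero s] (hk : 3 ≤ k) (hs : 0 < s)
    (hn : n = s * (k - 1)) (E : Finset (Finset (Fin n)))
    (hcyc : IsHypercycle k s E) (lam : ℝ) (hlam : IsLargestSignEig k E lam) :
    ∃ b : ℝ, (0 < b ∧ 2 * b ^ k + b ^ 2 - 1 = 0) ∧
      (∀ c : ℝ, 0 < c → 2 * c ^ k + c ^ 2 - 1 = 0 → c = b) ∧
      b ∈ Set.Ioo (1 / 2 : ℝ) 1 ∧
      lam = 2 + 2 * b ^ (k - 2) :=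
  largest_sign_eig_hypercycle_general hk E hcyc lam hlam
end

section
/- Let k be even and let G=(V,E) be a k-uniform hypercycle of size s>0 with Laplacian tensor L. Then λ(L) = 2+2β^{k−2}, where β is the unique positive real solution of the equation 2β^k+β^2−1=0, which lies in the interval (1/2,1). -/
open Finset

variable {α : Type*} [DecidableEq α]

/-! The lower bound comes from an explicit eigenvector: put `1` on the intersection vertices,
`-β` on one interior vertex of each edge and `β` on the others. Every edge product is then
`-β^(k-2)`, and since this vector has no zero entry, the eigen-equation at `v` may be multiplied
by `x v`; it becomes `deg v * (x v ^ k + β^(k-2)) = λ * x v ^ k`, which holds at intersection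
vertices for `λ = 2 + 2β^(k-2)` and, `k` being even, at interior vertices exactly because
`2β^k + β² = 1`.

For the upper bound let `x` be an eigenvector for `μ` with `(μ - 1)β² ≥ 1`, and `p` the largest
`|x|` on intersection vertices. At an interior vertex maximising `|x|` on its edge the
eigen-equation gives `(μ - 1)m² ≤ p²`, hence `m ≤ βp`; at the intersection vertex attaining `p`
it then gives `|μ - 2| ≤ 2β^(k-2)`, i.e. `μ ≤ λ`. As `(λ - 1)β² = 1`, every eigenvalue `μ > λ`
would satisfy `(μ - 1)β² ≥ 1`, so there is none. -/

theorem strictMonoOn_two_mul_pow_add_sq (k : ℕ) :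
    StrictMonoOn (fun b : ℝ => 2 * b ^ k + b ^ 2 - 1) (Set.Ici 0) := by
  intro a ha b hb hab
  have hk : a ^ k ≤ b ^ k := pow_le_pow_left₀ ha hab.le k
  have h2 : a ^ 2 < b ^ 2 := pow_lt_pow_left₀ hab ha two_ne_zero
  simp only
  linarith

theorem exists_two_mul_pow_add_sq_eq_one {k : ℕ} (hk : 2 ≤ k) :
    ∃ b ∈ Set.Ioo (1 / 2 : ℝ) 1, 2 * b ^ k + b ^ 2 - 1 = 0 := by
  have hcont : ContinuousOn (fun b : ℝ => 2 * b ^ k + b ^ 2 - 1) (Set.Icc (1 / 2) 1) := by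
    fun_prop
  have hhalf : (1 / 2 : ℝ) ^ k ≤ (1 / 2) ^ 2 := pow_le_pow_of_le_one (by norm_num) (by norm_num) hk
  refine intermediate_value_Ioo (by norm_num) hcont ⟨?_, by norm_num⟩
  norm_num at hhalf ⊢
  linarith

theorem lapAct_mul_self {k : ℕ} (hk : 1 ≤ k) (E : Finset (Finset α)) (x : α → ℝ) (i : α) :
    lapAct k E x i * x i =
      hdeg E i * x i ^ k - ∑ e ∈ E.filter (fun e => i ∈ e), ∏ j ∈ e, x j := by
  rw [lapAct, sub_mul, sum_mul, mul_assoc, ← pow_succ, Nat.sub_add_cancel hk]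
  congr 1
  exact sum_congr rfl fun e he => prod_erase_mul e x (mem_filter.1 he).2

variable (α) in
structure Hypercycle (k s : ℕ) [NeZero s] where
  P : Fin s → Finset α
  w : Fin s → α
  three_le : 3 ≤ k
  card_P : ∀ i, (P i).card = k
  exists_mem_P : ∀ v, ∃ i, v ∈ P i
  P_inter_P_succ : ∀ i, P i ∩ P (i + 1) = {w i}
  P_inter_P_eq_empty : ∀ i j, i ≠ j → j ≠ i + 1 → i ≠ j + 1 → P i ∩ P j = ∅
  w_injective : Function.Injective w

namespace Hypercycle

variable {k s : ℕ} [NeZero s] (C : Hypercycle α k s)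

def edges : Finset (Finset α) := univ.image C.P

end Hypercycle

theorem IsHypercycle.exists_hypercycle {k s : ℕ} [NeZero s] {E : Finset (Finset α)}
    (hk : 3 ≤ k) (h : IsHypercycle k s E) : ∃ C : Hypercycle α k s, C.edges = E := by
  obtain ⟨P, hcard, hcover, rfl, hone, hempty, hinj⟩ := h
  choose w hw using fun i => card_eq_one.1 (hone i)
  refine ⟨⟨P, w, hk, hcard, hcover, hw, hempty, fun i j hij => hinj ?_⟩, rfl⟩
  simp only [hw, hij]

namespace Hypercycle

variable {k s : ℕ} [NeZero s] (C : Hypercycle α k s)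

def interior (t : Fin s) : Finset α := ((C.P t).erase (C.w (t - 1))).erase (C.w t)

theorem w_mem_P (i : Fin s) : C.w i ∈ C.P i :=
  (mem_inter.1 (C.P_inter_P_succ i ▸ mem_singleton_self _)).1

theorem w_mem_P_succ (i : Fin s) : C.w i ∈ C.P (i + 1) :=
  (mem_inter.1 (C.P_inter_P_succ i ▸ mem_singleton_self _)).2

theorem w_sub_one_mem_P (t : Fin s) : C.w (t - 1) ∈ C.P t := by
  simpa using C.w_mem_P_succ (t - 1)

theorem P_succ_ne (i : Fin s) : C.P (i + 1) ≠ C.P i := by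
  intro h
  have := congrArg card (C.P_inter_P_succ i)
  rw [h, inter_self, C.card_P, card_singleton] at this
  have := C.three_le
  omega

theorem succ_ne (C : Hypercycle α k s) (i : Fin s) : i + 1 ≠ i :=
  fun h => C.P_succ_ne i (by rw [h])

theorem w_sub_one_ne (t : Fin s) : C.w (t - 1) ≠ C.w t := fun h =>
  C.succ_ne (t - 1) (by rw [sub_add_cancel, C.w_injective h])

theorem eq_succ_or_eq_succ_of_mem_s14 {v : α} {a b : Fin s} (ha : v ∈ C.P a) (hb : v ∈ C.P b)
    (hab : a ≠ b) : (b = a + 1 ∧ v = C.w a) ∨ (a = b + 1 ∧ v = C.w b) := by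
  have hv : v ∈ C.P a ∩ C.P b := mem_inter.2 ⟨ha, hb⟩
  by_cases hba : b = a + 1
  · subst hba
    rw [C.P_inter_P_succ] at hv
    exact .inl ⟨rfl, mem_singleton.1 hv⟩
  by_cases hab' : a = b + 1
  · subst hab'
    rw [inter_comm, C.P_inter_P_succ] at hv
    exact .inr ⟨rfl, mem_singleton.1 hv⟩
  · rw [C.P_inter_P_eq_empty a b hab hba hab'] at hv
    exact absurd hv (notMem_empty v)

theorem w_mem_P_iff {i j : Fin s} : C.w i ∈ C.P j ↔ j = i ∨ j = i + 1 := by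
  refine ⟨fun h => ?_, by rintro (rfl | rfl); exacts [C.w_mem_P j, C.w_mem_P_succ i]⟩
  by_contra! hne
  rcases C.eq_succ_or_eq_succ_of_mem_s14 (C.w_mem_P i) h hne.1.symm with ⟨hj, -⟩ | ⟨-, hw⟩
  · exact hne.2 hj
  · exact hne.1 (C.w_injective hw).symm

theorem eq_of_mem_interior {v : α} {t j : Fin s} (hv : v ∈ C.interior t) (hj : v ∈ C.P j) :
    j = t := by
  simp only [interior, mem_erase] at hv
  obtain ⟨hvw, hvw', hvP⟩ := hv
  by_contra hjt
  rcases C.eq_succ_or_eq_succ_of_mem_s14 hvP hj (Ne.symm hjt) with ⟨-, h⟩ | ⟨ht, h⟩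
  · exact hvw h
  · exact hvw' (by rw [h, ht, add_sub_cancel_right])

theorem ne_w_of_mem_interior {v : α} {t : Fin s} (hv : v ∈ C.interior t) (i : Fin s) :
    v ≠ C.w i := by
  rintro rfl
  have h := C.eq_of_mem_interior hv (C.w_mem_P i)
  exact C.succ_ne i ((C.eq_of_mem_interior hv (C.w_mem_P_succ i)).trans h.symm)

theorem interior_subset_P (t : Fin s) : C.interior t ⊆ C.P t :=
  (erase_subset _ _).trans (erase_subset _ _)

theorem card_interior (t : Fin s) : (C.interior t).card = k - 2 := by
  rw [interior, card_erase_of_mem (mem_erase.2 ⟨(C.w_sub_one_ne t).symm, C.w_mem_P t⟩),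
    card_erase_of_mem (C.w_sub_one_mem_P t), C.card_P]
  omega

theorem interior_nonempty (t : Fin s) : (C.interior t).Nonempty := by
  rw [← card_pos, C.card_interior]
  have := C.three_le
  omega

theorem eq_w_or_mem_interior (v : α) : (∃ i, v = C.w i) ∨ ∃ t, v ∈ C.interior t := by
  obtain ⟨t, hv⟩ := C.exists_mem_P v
  by_cases h : ∃ i, v = C.w i
  · exact .inl h
  push Not at h
  exact .inr ⟨t, mem_erase.2 ⟨h t, mem_erase.2 ⟨h (t - 1), hv⟩⟩⟩

theorem prod_P (t : Fin s) (f : α → ℝ) :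
    ∏ j ∈ C.P t, f j = f (C.w (t - 1)) * f (C.w t) * ∏ j ∈ C.interior t, f j := by
  rw [interior, mul_assoc, mul_prod_erase _ _ (mem_erase.2 ⟨(C.w_sub_one_ne t).symm, C.w_mem_P t⟩),
    mul_prod_erase _ _ (C.w_sub_one_mem_P t)]

theorem filter_w_mem_edges (i : Fin s) :
    C.edges.filter (fun e => C.w i ∈ e) = {C.P i, C.P (i + 1)} := by
  ext e
  simp only [edges, mem_filter, mem_image, mem_univ, true_and, mem_insert, mem_singleton]
  constructor
  · rintro ⟨⟨j, rfl⟩, hj⟩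
    rcases C.w_mem_P_iff.1 hj with rfl | rfl <;> simp
  · rintro (rfl | rfl)
    exacts [⟨⟨i, rfl⟩, C.w_mem_P i⟩, ⟨⟨i + 1, rfl⟩, C.w_mem_P_succ i⟩]

theorem filter_mem_edges_of_mem_interior {v : α} {t : Fin s} (hv : v ∈ C.interior t) :
    C.edges.filter (fun e => v ∈ e) = {C.P t} := by
  ext e
  simp only [edges, mem_filter, mem_image, mem_univ, true_and, mem_singleton]
  constructor
  · rintro ⟨⟨j, rfl⟩, hj⟩
    rw [C.eq_of_mem_interior hv hj]
  · rintro rfl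
    exact ⟨⟨t, rfl⟩, C.interior_subset_P t hv⟩

theorem lapAct_w_mul_self (x : α → ℝ) (i : Fin s) :
    lapAct k C.edges x (C.w i) * x (C.w i) =
      2 * x (C.w i) ^ k - (∏ j ∈ C.P i, x j + ∏ j ∈ C.P (i + 1), x j) := by
  rw [lapAct_mul_self (by have := C.three_le; omega), hdeg, C.filter_w_mem_edges,
    card_pair (C.P_succ_ne i).symm, sum_pair (C.P_succ_ne i).symm]
  norm_num

theorem lapAct_mul_self_of_mem_interior (x : α → ℝ) {v : α} {t : Fin s}
    (hv : v ∈ C.interior t) :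
    lapAct k C.edges x v * x v = x v ^ k - ∏ j ∈ C.P t, x j := by
  rw [lapAct_mul_self (by have := C.three_le; omega), hdeg, C.filter_mem_edges_of_mem_interior hv,
    card_singleton, sum_singleton]
  norm_num

end Hypercycle

namespace Hypercycle

variable {k s : ℕ} [NeZero s] (C : Hypercycle α k s)

noncomputable def marked (t : Fin s) : α := (C.interior_nonempty t).choose

theorem marked_mem_interior (t : Fin s) : C.marked t ∈ C.interior t :=
  (C.interior_nonempty t).choose_spec

open Classical in
noncomputable def signedVector (β : ℝ) (v : α) : ℝ :=
  if v ∈ Set.range C.w then 1 else if v ∈ Set.range C.marked then -β else β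

theorem signedVector_w (β : ℝ) (i : Fin s) : C.signedVector β (C.w i) = 1 := by
  simp [signedVector]

theorem signedVector_marked (β : ℝ) (t : Fin s) : C.signedVector β (C.marked t) = -β := by
  have h : C.marked t ∉ Set.range C.w := by
    rintro ⟨i, hi⟩
    exact C.ne_w_of_mem_interior (C.marked_mem_interior t) i hi.symm
  simp [signedVector, h]

theorem signedVector_of_mem_interior (β : ℝ) {v : α} {t : Fin s} (hv : v ∈ C.interior t)
    (hvt : v ≠ C.marked t) : C.signedVector β v = β := by
  have hw : v ∉ Set.range C.w := by
    rintro ⟨i, rfl⟩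
    exact C.ne_w_of_mem_interior hv i rfl
  have hm : v ∉ Set.range C.marked := by
    rintro ⟨t', rfl⟩
    exact hvt (by rw [C.eq_of_mem_interior (C.marked_mem_interior t')
      (C.interior_subset_P t hv)])
  simp [signedVector, hw, hm]

theorem signedVector_ne_zero {β : ℝ} (hβ : β ≠ 0) (v : α) : C.signedVector β v ≠ 0 := by
  unfold signedVector
  split_ifs <;> simp [hβ]

theorem signedVector_pow_of_mem_interior {β : ℝ} (hk : Even k) {v : α} {t : Fin s}
    (hv : v ∈ C.interior t) : C.signedVector β v ^ k = β ^ k := by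
  by_cases hvt : v = C.marked t
  · rw [hvt, signedVector_marked, hk.neg_pow]
  · rw [C.signedVector_of_mem_interior β hv hvt]

theorem prod_signedVector (β : ℝ) (t : Fin s) :
    ∏ j ∈ C.P t, C.signedVector β j = -β ^ (k - 2) := by
  have hrest : ∀ j ∈ (C.interior t).erase (C.marked t), C.signedVector β j = β :=
    fun j hj => C.signedVector_of_mem_interior β (mem_of_mem_erase hj) (ne_of_mem_erase hj)
  rw [C.prod_P, signedVector_w, signedVector_w, ← mul_prod_erase _ _ (C.marked_mem_interior t),
    signedVector_marked, prod_congr rfl hrest, prod_const,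
    card_erase_of_mem (C.marked_mem_interior t), C.card_interior]
  have := C.three_le
  rw [one_mul, one_mul, neg_mul, ← pow_succ', Nat.sub_add_cancel (by omega)]

theorem isLapEig_of_root (hk : Even k) {β : ℝ} (hβ : 2 * β ^ k + β ^ 2 - 1 = 0) :
    IsLapEig k C.edges (2 + 2 * β ^ (k - 2)) := by
  obtain ⟨K, rfl⟩ : ∃ K, k = K + 2 := ⟨k - 2, by have := C.three_le; omega⟩
  have hβ0 : β ≠ 0 := by
    rintro rfl
    norm_num at hβ
  refine ⟨C.signedVector β, fun h => by simpa [h] using C.signedVector_w β 0, fun v => ?_⟩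
  refine mul_right_cancel₀ (C.signedVector_ne_zero hβ0 v) ?_
  rw [mul_assoc, ← pow_succ, show K + 2 - 1 + 1 = K + 2 by omega]
  rcases C.eq_w_or_mem_interior v with ⟨i, rfl⟩ | ⟨t, hv⟩
  · rw [lapAct_w_mul_self, prod_signedVector, prod_signedVector, signedVector_w]
    ring
  · rw [lapAct_mul_self_of_mem_interior _ _ hv, prod_signedVector,
      C.signedVector_pow_of_mem_interior hk hv, Nat.add_sub_cancel]
    linear_combination (-β ^ K) * hβ

end Hypercycle

namespace Hypercycle

variable {k s : ℕ} [NeZero s] (C : Hypercycle α k s)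

theorem abs_prod_P_le {x : α → ℝ} {p m : ℝ} (t : Fin s) (hp : ∀ i, |x (C.w i)| ≤ p)
    (hm : ∀ v ∈ C.interior t, |x v| ≤ m) : |∏ j ∈ C.P t, x j| ≤ p ^ 2 * m ^ (k - 2) := by
  have hp0 : 0 ≤ p := (abs_nonneg _).trans (hp 0)
  have hint : ∏ j ∈ C.interior t, |x j| ≤ m ^ (k - 2) := by
    rw [← C.card_interior t, ← prod_const]
    exact prod_le_prod (fun j _ => abs_nonneg _) hm
  rw [C.prod_P, abs_mul, abs_mul, abs_prod, sq]
  exact mul_le_mul (mul_le_mul (hp _) (hp _) (abs_nonneg _) hp0) hint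
    (prod_nonneg fun j _ => abs_nonneg _) (mul_nonneg hp0 hp0)

theorem abs_le_of_mem_interior {x : α → ℝ} {μ β p : ℝ}
    (hx : ∀ v, lapAct k C.edges x v = μ * x v ^ (k - 1)) (hβ : 0 ≤ β)
    (hμβ : 1 ≤ (μ - 1) * β ^ 2) (hp : ∀ i, |x (C.w i)| ≤ p) {v : α} {t : Fin s}
    (hv : v ∈ C.interior t) : |x v| ≤ β * p := by
  obtain ⟨u, hu, hmax⟩ := exists_max_image (C.interior t) (fun j => |x j|) ⟨v, hv⟩
  refine (hmax v hv).trans (le_of_not_gt fun hlt => ?_)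
  have hk := C.three_le
  have hμ : 0 < μ - 1 := by nlinarith [sq_nonneg β]
  have hm : 0 < |x u| := (mul_nonneg hβ ((abs_nonneg _).trans (hp 0))).trans_lt hlt
  have heq : (μ - 1) * x u ^ k = -∏ j ∈ C.P t, x j := by
    have := C.lapAct_mul_self_of_mem_interior x hu
    rw [hx, mul_assoc, ← pow_succ, Nat.sub_add_cancel (by omega)] at this
    linarith
  have hle : (μ - 1) * |x u| ^ 2 * |x u| ^ (k - 2) ≤ p ^ 2 * |x u| ^ (k - 2) :=
    calc (μ - 1) * |x u| ^ 2 * |x u| ^ (k - 2) = |(μ - 1) * x u ^ k| := by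
          rw [abs_mul, abs_pow, abs_of_pos hμ, mul_assoc, ← pow_add, Nat.add_sub_cancel' (by omega)]
      _ = |∏ j ∈ C.P t, x j| := by rw [heq, abs_neg]
      _ ≤ p ^ 2 * |x u| ^ (k - 2) := C.abs_prod_P_le t hp hmax
  have hsq : (μ - 1) * |x u| ^ 2 ≤ p ^ 2 := le_of_mul_le_mul_right hle (pow_pos hm _)
  have hβp : (β * p) ^ 2 < |x u| ^ 2 :=
    pow_lt_pow_left₀ hlt (mul_nonneg hβ ((abs_nonneg _).trans (hp 0))) two_ne_zero
  nlinarith [mul_lt_mul_of_pos_left hβp hμ, mul_le_mul_of_nonneg_right hμβ (sq_nonneg p)]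

theorem le_of_isLapEig {μ β : ℝ} (hμ : IsLapEig k C.edges μ) (hβ : 0 ≤ β)
    (hμβ : 1 ≤ (μ - 1) * β ^ 2) : μ ≤ 2 + 2 * β ^ (k - 2) := by
  obtain ⟨x, hx0, hx⟩ := hμ
  obtain ⟨i, hi⟩ := Finite.exists_max fun i => |x (C.w i)|
  have hint := fun t v (hv : v ∈ C.interior t) => C.abs_le_of_mem_interior hx hβ hμβ hi hv
  have hp : 0 < |x (C.w i)| := by
    refine (abs_nonneg _).lt_of_ne' fun hp0 => hx0 (funext fun v => ?_)
    rcases C.eq_w_or_mem_interior v with ⟨j, rfl⟩ | ⟨t, hv⟩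
    · exact abs_nonpos_iff.1 (hp0 ▸ hi j)
    · simpa [hp0] using hint t v hv
  have hk := C.three_le
  have hedge (t : Fin s) : |∏ j ∈ C.P t, x j| ≤ β ^ (k - 2) * |x (C.w i)| ^ k := by
    have h := C.abs_prod_P_le t hi (hint t)
    rwa [mul_pow, mul_left_comm, ← pow_add, Nat.add_sub_cancel' (by omega)] at h
  have heq : (2 - μ) * x (C.w i) ^ k = ∏ j ∈ C.P i, x j + ∏ j ∈ C.P (i + 1), x j := by
    have := C.lapAct_w_mul_self x i
    rw [hx, mul_assoc, ← pow_succ, Nat.sub_add_cancel (by omega)] at this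
    linarith
  have hle : |2 - μ| * |x (C.w i)| ^ k ≤ 2 * β ^ (k - 2) * |x (C.w i)| ^ k :=
    calc |2 - μ| * |x (C.w i)| ^ k = |∏ j ∈ C.P i, x j + ∏ j ∈ C.P (i + 1), x j| := by
          rw [← heq, abs_mul, abs_pow]
      _ ≤ |∏ j ∈ C.P i, x j| + |∏ j ∈ C.P (i + 1), x j| := abs_add_le _ _
      _ ≤ 2 * β ^ (k - 2) * |x (C.w i)| ^ k := by linarith [hedge i, hedge (i + 1)]
  linarith [le_of_mul_le_mul_right hle (pow_pos hp k), neg_abs_le (2 - μ)]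

theorem le_two_add_of_isLapEig {μ β : ℝ} (hμ : IsLapEig k C.edges μ) (hβ : 0 ≤ β)
    (hroot : 2 * β ^ k + β ^ 2 - 1 = 0) : μ ≤ 2 + 2 * β ^ (k - 2) := by
  by_contra! hlt
  have hroot_sq : (2 + 2 * β ^ (k - 2) - 1) * β ^ 2 = 1 := by
    obtain ⟨K, rfl⟩ : ∃ K, k = K + 2 := ⟨k - 2, by have := C.three_le; omega⟩
    rw [Nat.add_sub_cancel]
    linear_combination hroot
  have hμβ : 1 ≤ (μ - 1) * β ^ 2 :=
    hroot_sq ▸ mul_le_mul_of_nonneg_right (by linarith) (sq_nonneg β)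
  exact hlt.not_ge (C.le_of_isLapEig hμ hβ hμβ)

end Hypercycle

theorem largest_lap_eig_hypercycle_even_general {k s n : ℕ} [NeZero s] (hk : 3 ≤ k)
    (hkeven : Even k)
    (E : Finset (Finset (Fin n))) (hcyc : IsHypercycle k s E)
    (lam : ℝ) (hlam : IsLargestLapEig k E lam) :
    ∃ b : ℝ, (0 < b ∧ 2 * b ^ k + b ^ 2 - 1 = 0) ∧
      (∀ c : ℝ, 0 < c → 2 * c ^ k + c ^ 2 - 1 = 0 → c = b) ∧
      b ∈ Set.Ioo (1 / 2 : ℝ) 1 ∧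
      lam = 2 + 2 * b ^ (k - 2) := by
  obtain ⟨C, rfl⟩ := hcyc.exists_hypercycle hk
  obtain ⟨b, hb, hroot⟩ := exists_two_mul_pow_add_sq_eq_one (by omega : 2 ≤ k)
  have hb0 : 0 < b := lt_trans (by norm_num) hb.1
  refine ⟨b, ⟨hb0, hroot⟩, fun c hc hcroot => ?_, hb, le_antisymm ?_ ?_⟩
  · exact (strictMonoOn_two_mul_pow_add_sq k).injOn hc.le hb0.le (hcroot.trans hroot.symm)
  · exact C.le_two_add_of_isLapEig hlam.1 hb0.le hroot
  · exact hlam.2 _ (C.isLapEig_of_root hkeven hroot)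

/-- For `k` even and a `k`-uniform hypercycle of size `s > 0` with
Laplacian tensor `L`, `λ(L) = 2 + 2β^(k-2)` where `β` is the unique positive real
solution of `2β^k + β^2 - 1 = 0`, which lies in `(1/2, 1)`. -/
theorem largest_lap_eig_hypercycle_even {k s n : ℕ} [NeZero s] (hk : 3 ≤ k)
    (hkeven : Even k) (hs : 0 < s) (hn : n = s * (k - 1))
    (E : Finset (Finset (Fin n))) (hcyc : IsHypercycle k s E)
    (lam : ℝ) (hlam : IsLargestLapEig k E lam) :
    ∃ b : ℝ, (0 < b ∧ 2 * b ^ k + b ^ 2 - 1 = 0) ∧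
      (∀ c : ℝ, 0 < c → 2 * c ^ k + c ^ 2 - 1 = 0 → c = b) ∧
      b ∈ Set.Ioo (1 / 2 : ℝ) 1 ∧
      lam = 2 + 2 * b ^ (k - 2) :=
  largest_lap_eig_hypercycle_even_general hk hkeven E hcyc lam hlam
end

section
/- Let G=(V,E) be a k-uniform hyperstar of size d>0 and let x∈ℝ^n be an H-eigenvector of the Laplacian tensor L of G corresponding to an H-eigenvalue λ with λ≠0 and λ≠1. If x_i=0 for some vertex i other than the heart, then x_j=0 for all vertices j≠heart in the leaf le(i) containing i; moreover, in this situation, if h is the heart then x_h≠0. -/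
open Finset

variable {α : Type*} [DecidableEq α]

/-!
A non-heart vertex `j` lies in exactly one edge, its leaf `{h} ∪ P s`, so its eigen-equation
reads `(1 - λ) x_j^{k-1} = x_h ∏_{v ∈ P s, v ≠ j} x_v`. As `λ ≠ 1`, `x_j` vanishes exactly when
`x_h` or another coordinate of the leaf does. Hence `x_h = 0` would force `x = 0`, and once
`x_h ≠ 0`, a zero coordinate in a leaf makes all the others in that leaf vanish.
-/

theorem lapAct_of_filter_mem_eq_singleton {k : ℕ} {E : Finset (Finset α)} {e : Finset α}
    {j : α} (x : α → ℝ) (hE : E.filter (fun e => j ∈ e) = {e}) :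
    lapAct k E x j = x j ^ (k - 1) - ∏ v ∈ e.erase j, x v := by
  simp [lapAct, hdeg, hE]

section Hyperstar

open Function

variable {ι : Type*} [Fintype ι] {h j : α} {P : ι → Finset α} {s : ι}

theorem filter_mem_image_insert_eq_singleton (hP : Pairwise (Disjoint on P)) (hjh : j ≠ h)
    (hj : j ∈ P s) :
    (univ.image fun i => insert h (P i)).filter (fun e => j ∈ e) = {insert h (P s)} := by
  have hleaf : univ.filter (fun i => j ∈ insert h (P i)) = {s} := by
    ext i
    simp only [mem_filter, mem_univ, true_and, mem_insert, hjh, false_or, mem_singleton]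
    exact ⟨fun hi => by_contra fun hne => disjoint_left.mp (hP hne) hi hj, fun hi => hi ▸ hj⟩
  rw [filter_image, hleaf, image_singleton]

theorem lapAct_hyperstar_of_mem_leaf (k : ℕ) (x : α → ℝ) (hhP : h ∉ P s)
    (hP : Pairwise (Disjoint on P)) (hj : j ∈ P s) :
    lapAct k (univ.image fun i => insert h (P i)) x j =
      x j ^ (k - 1) - x h * ∏ v ∈ (P s).erase j, x v := by
  have hjh : j ≠ h := fun hjh => hhP (hjh ▸ hj)
  rw [lapAct_of_filter_mem_eq_singleton x (filter_mem_image_insert_eq_singleton hP hjh hj),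
    erase_insert_of_ne hjh.symm, prod_insert fun hh => hhP (mem_of_mem_erase hh)]

theorem hyperstar_eigvec_leaf_eq_zero_iff {k : ℕ} {x : α → ℝ} {lam : ℝ} (hk : 2 ≤ k)
    (hlam : lam ≠ 1) (hhP : h ∉ P s) (hP : Pairwise (Disjoint on P)) (hj : j ∈ P s)
    (heig : lapAct k (univ.image fun i => insert h (P i)) x j = lam * x j ^ (k - 1)) :
    x j = 0 ↔ x h * ∏ v ∈ (P s).erase j, x v = 0 := by
  rw [lapAct_hyperstar_of_mem_leaf k x hhP hP hj] at heig
  have hleaf : (1 - lam) * x j ^ (k - 1) = x h * ∏ v ∈ (P s).erase j, x v := by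
    linear_combination heig
  rw [← hleaf, mul_eq_zero, pow_eq_zero_iff (by omega), or_iff_right (sub_ne_zero.mpr hlam.symm)]

end Hyperstar

theorem hyperstar_eigvec_zero_on_leaf_general {n k d : ℕ} (hk : 3 ≤ k)
    (h : Fin n) (P : Fin d → Finset (Fin n))
    (hhP : ∀ i, h ∉ P i)
    (hPdisj : ∀ i j, i ≠ j → Disjoint (P i) (P j))
    (hPcover : ∀ v : Fin n, v ≠ h → ∃ i, v ∈ P i)
    (E : Finset (Finset (Fin n)))
    (hE : E = Finset.image (fun i => insert h (P i)) Finset.univ)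
    (lam : ℝ) (hlam1 : lam ≠ 1)
    (x : Fin n → ℝ) (hx : x ≠ 0)
    (heig : ∀ i, lapAct k E x i = lam * x i ^ (k - 1))
    (i : Fin n) (hxi : x i = 0) (t : Fin d) (hit : i ∈ P t) :
    (∀ j ∈ P t, x j = 0) ∧ x h ≠ 0 := by
  subst hE
  have hleaf {s : Fin d} {j : Fin n} (hj : j ∈ P s) :=
    hyperstar_eigvec_leaf_eq_zero_iff (by omega) hlam1 (hhP s) hPdisj hj (heig j)
  have hxh : x h ≠ 0 := by
    refine fun hxh => hx (funext fun v => ?_)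
    by_cases hvh : v = h
    · rwa [hvh]
    · obtain ⟨s, hv⟩ := hPcover v hvh
      exact (hleaf hv).mpr (by rw [hxh, zero_mul])
  refine ⟨fun j hj => ?_, hxh⟩
  by_cases hji : j = i
  · rwa [hji]
  · have hi : i ∈ (P t).erase j := mem_erase.mpr ⟨Ne.symm hji, hit⟩
    exact (hleaf hj).mpr (mul_eq_zero_of_right _ (prod_eq_zero hi hxi))

/-- Let `G` be a `k`-uniform hyperstar of size `d > 0` with heart `h`,
leaf parts `P 0, …, P (d-1)` (the leaf containing a non-heart vertex `i ∈ P t` being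
`insert h (P t)`), and let `x` be an H-eigenvector of the Laplacian tensor corresponding
to an H-eigenvalue `lam` with `lam ≠ 0` and `lam ≠ 1`. If `x i = 0` for some
vertex `i` other than the heart, then `x j = 0` for all non-heart vertices `j` of the
leaf containing `i`, and moreover `x h ≠ 0`. -/
theorem hyperstar_eigvec_zero_on_leaf {n k d : ℕ} (hk : 3 ≤ k) (hkn : k ≤ n)
    (hd : 0 < d) (h : Fin n) (P : Fin d → Finset (Fin n))
    (hhP : ∀ i, h ∉ P i) (hPcard : ∀ i, (P i).card = k - 1)
    (hPdisj : ∀ i j, i ≠ j → Disjoint (P i) (P j))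
    (hPcover : ∀ v : Fin n, v ≠ h → ∃ i, v ∈ P i)
    (E : Finset (Finset (Fin n)))
    (hE : E = Finset.image (fun i => insert h (P i)) Finset.univ)
    (lam : ℝ) (hlam0 : lam ≠ 0) (hlam1 : lam ≠ 1)
    (x : Fin n → ℝ) (hx : x ≠ 0)
    (heig : ∀ i, lapAct k E x i = lam * x i ^ (k - 1))
    (i : Fin n) (hih : i ≠ h) (hxi : x i = 0) (t : Fin d) (hit : i ∈ P t) :
    (∀ j ∈ P t, x j = 0) ∧ x h ≠ 0 :=
  hyperstar_eigvec_zero_on_leaf_general hk h P hhP hPdisj hPcover E hE lam hlam1 x hx heig i hxi t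
    hit
end

section
/- Let k be even and let G=(V,E) be a k-uniform hyperstar of size d>0 with Laplacian tensor L. Then there exists an H-eigenvector z∈ℝ^n of L corresponding to λ(L) such that z_i takes one constant value for all i∈sup(z) with i not the heart. -/
open Finset

variable {α : Type*} [DecidableEq α]

open Function

/-!
The largest H-eigenvalue is the root `μ > d` of `(μ - d) * (μ - 1) ^ (k - 1) = d`, with
eigenvector `1 - μ` at the heart and `1` elsewhere; checking the heart equation uses that
`k - 1` is odd. Conversely, let `(λ, x)` be an eigenpair. If `x` vanishes at the heart, a leaf
equation gives `λ = 1`. Otherwise the `k - 1` leaf equations of a part multiply to show that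
`(1 - λ) ^ (k - 1)` times the product of `x` over the part is `0` or `x_h ^ (k - 1)`; fed
into the heart equation this yields `|λ - d| * |λ - 1| ^ (k - 1) ≤ d`, and
`t ↦ (t - d) * (t - 1) ^ (k - 1)` is strictly increasing on `[d, ∞)`, so `λ ≤ μ`.
-/

lemma strictMonoOn_sub_mul_sub_one_pow {d : ℝ} (hd : 1 ≤ d) (K : ℕ) :
    StrictMonoOn (fun t : ℝ => (t - d) * (t - 1) ^ K) (Set.Ici d) := by
  intro s hs t _ hst
  simp only [Set.mem_Ici] at hs
  exact mul_lt_mul_of_nonneg_of_pos (by linarith)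
    (pow_le_pow_left₀ (by linarith) (by linarith) K) (by linarith) (pow_pos (by linarith) K)

lemma exists_gt_sub_mul_sub_one_pow_eq {d : ℝ} (hd : 1 ≤ d) (K : ℕ) :
    ∃ μ, d < μ ∧ (μ - d) * (μ - 1) ^ K = d := by
  have hcont : ContinuousOn (fun t : ℝ => (t - d) * (t - 1) ^ K) (Set.Icc d (2 * d + 1)) := by
    fun_prop
  have hmem : d ∈ Set.Icc ((d - d) * (d - 1) ^ K) ((2 * d + 1 - d) * (2 * d + 1 - 1) ^ K) := by
    constructor
    · simp only [sub_self, zero_mul]; linarith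
    · nlinarith [one_le_pow₀ (a := 2 * d + 1 - 1) (n := K) (by linarith)]
  obtain ⟨μ, hμI, hμ⟩ := intermediate_value_Icc (by linarith) hcont hmem
  refine ⟨μ, lt_of_le_of_ne hμI.1 ?_, hμ⟩
  rintro rfl
  simp only [sub_self, zero_mul] at hμ
  linarith

lemma pow_card_mul_prod_eq_zero_or_eq {ι : Type*} [DecidableEq ι] {s : Finset ι} {x : ι → ℝ}
    {a c : ℝ} (hx : ∀ i ∈ s, c * x i ^ #s = a * ∏ j ∈ s.erase i, x j) :
    c ^ #s * ∏ j ∈ s, x j = 0 ∨ c ^ #s * ∏ j ∈ s, x j = a ^ #s := by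
  set p := ∏ j ∈ s, x j with hp_def
  by_cases hp : p = 0
  · exact .inl (by rw [hp, mul_zero])
  right
  have hx' : ∀ i ∈ s, c * x i ^ (#s + 1) = a * p := fun i hi => by
    rw [hp_def, ← mul_prod_erase s x hi, pow_succ, ← mul_assoc, hx i hi]; ring
  -- multiplying the `#s` equations `hx'` gives `c ^ #s * p ^ (#s + 1) = a ^ #s * p ^ #s`
  have hprod := prod_congr rfl hx'
  rw [prod_mul_distrib, prod_mul_distrib, prod_const, prod_const, prod_const, prod_pow] at hprod
  have : (c ^ #s * p - a ^ #s) * p ^ #s = 0 := by linear_combination hprod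
  exact sub_eq_zero.mp ((mul_eq_zero.mp this).resolve_right (pow_ne_zero _ hp))

def hyperstarEdges {d : ℕ} (h : α) (P : Fin d → Finset α) : Finset (Finset α) :=
  univ.image fun m => insert h (P m)

section Hyperstar

variable {d : ℕ} {h : α} {P : Fin d → Finset α}

lemma insert_heart_injective (hhP : ∀ m, h ∉ P m) (hPdisj : Pairwise (Disjoint on P))
    (hPne : ∀ m, (P m).Nonempty) : Injective fun m => insert h (P m) := by
  intro m m' hmm'
  have hP : P m = P m' := by
    simpa [erase_insert (hhP m), erase_insert (hhP m')] using congrArg (·.erase h) hmm'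
  by_contra hne
  have hdisj : Disjoint (P m) (P m') := hPdisj hne
  rw [hP, disjoint_self] at hdisj
  exact (hPne m').ne_empty hdisj

lemma lapAct_hyperstarEdges_heart (hhP : ∀ m, h ∉ P m) (hPdisj : Pairwise (Disjoint on P))
    (hPne : ∀ m, (P m).Nonempty) (k : ℕ) (x : α → ℝ) :
    lapAct k (hyperstarEdges h P) x h = d * x h ^ (k - 1) - ∑ m, ∏ j ∈ P m, x j := by
  have hfilter : (hyperstarEdges h P).filter (h ∈ ·) = hyperstarEdges h P :=
    filter_true_of_mem <| by simp [hyperstarEdges]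
  rw [lapAct, hdeg, hfilter, hyperstarEdges,
    card_image_of_injective _ (insert_heart_injective hhP hPdisj hPne),
    sum_image fun m _ m' _ hmm' => insert_heart_injective hhP hPdisj hPne hmm']
  simp [erase_insert (hhP _)]

lemma filter_mem_hyperstarEdges_of_mem (hhP : ∀ m, h ∉ P m) (hPdisj : Pairwise (Disjoint on P))
    {m : Fin d} {i : α} (hi : i ∈ P m) :
    (hyperstarEdges h P).filter (i ∈ ·) = {insert h (P m)} := by
  have hih : i ≠ h := by rintro rfl; exact hhP m hi
  ext e
  simp only [hyperstarEdges, mem_filter, mem_image, mem_univ, true_and, mem_singleton]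
  constructor
  · rintro ⟨⟨m', rfl⟩, hie⟩
    have hm' : i ∈ P m' := (mem_insert.mp hie).resolve_left hih
    obtain rfl : m' = m := by
      by_contra hne
      exact disjoint_left.mp (hPdisj hne) hm' hi
    rfl
  · rintro rfl
    exact ⟨⟨m, rfl⟩, mem_insert_of_mem hi⟩

lemma lapAct_hyperstarEdges_of_mem (hhP : ∀ m, h ∉ P m) (hPdisj : Pairwise (Disjoint on P))
    {m : Fin d} {i : α} (hi : i ∈ P m) (k : ℕ) (x : α → ℝ) :
    lapAct k (hyperstarEdges h P) x i = x i ^ (k - 1) - x h * ∏ j ∈ (P m).erase i, x j := by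
  have hih : i ≠ h := by rintro rfl; exact hhP m hi
  rw [lapAct, hdeg, filter_mem_hyperstarEdges_of_mem hhP hPdisj hi, card_singleton,
    sum_singleton, erase_insert_of_ne hih.symm,
    prod_insert fun hh => hhP m (mem_of_mem_erase hh)]
  simp

lemma IsLapEig.eq_one_or_abs_mul_abs_pow_le_of_hyperstarEdges {k : ℕ} {lam : ℝ}
    (hhP : ∀ m, h ∉ P m) (hPcard : ∀ m, #(P m) = k - 1) (hPdisj : Pairwise (Disjoint on P))
    (hPcover : ∀ v, v ≠ h → ∃ m, v ∈ P m) (hPne : ∀ m, (P m).Nonempty)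
    (hlam : IsLapEig k (hyperstarEdges h P) lam) :
    lam = 1 ∨ |lam - d| * |lam - 1| ^ (k - 1) ≤ d := by
  obtain ⟨x, hx0, hx⟩ := hlam
  by_cases hxh : x h = 0
  · left
    obtain ⟨i, hxi⟩ := Function.ne_iff.mp hx0
    obtain ⟨m, hi⟩ := hPcover i (by rintro rfl; exact hxi hxh)
    have hleaf := hx i
    rw [lapAct_hyperstarEdges_of_mem hhP hPdisj hi, hxh, zero_mul, sub_zero] at hleaf
    have : (lam - 1) * x i ^ (k - 1) = 0 := by linear_combination -hleaf
    exact sub_eq_zero.mp ((mul_eq_zero.mp this).resolve_right (pow_ne_zero _ hxi))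
  right
  have hpart : ∀ m, |(1 - lam) ^ (k - 1) * ∏ j ∈ P m, x j| ≤ |x h ^ (k - 1)| := by
    intro m
    have hleaf : ∀ i ∈ P m, (1 - lam) * x i ^ #(P m) = x h * ∏ j ∈ (P m).erase i, x j :=
      fun i hi => by
        have := hx i
        rw [lapAct_hyperstarEdges_of_mem hhP hPdisj hi] at this
        rw [hPcard]; linear_combination this
    rcases hPcard m ▸ pow_card_mul_prod_eq_zero_or_eq hleaf with h0 | h0 <;> simp [h0]
  have hheart : (1 - lam) ^ (k - 1) * ((d - lam) * x h ^ (k - 1))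
      = ∑ m, (1 - lam) ^ (k - 1) * ∏ j ∈ P m, x j := by
    rw [← mul_sum]
    linear_combination (1 - lam) ^ (k - 1) *
      ((lapAct_hyperstarEdges_heart hhP hPdisj hPne k x).symm.trans (hx h))
  have hbound : |lam - d| * |lam - 1| ^ (k - 1) * |x h ^ (k - 1)| ≤ d * |x h ^ (k - 1)| :=
    calc |lam - d| * |lam - 1| ^ (k - 1) * |x h ^ (k - 1)|
        = |∑ m, (1 - lam) ^ (k - 1) * ∏ j ∈ P m, x j| := by
          rw [← hheart, abs_mul, abs_mul, abs_pow, abs_pow, abs_sub_comm 1,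
            abs_sub_comm (d : ℝ)]
          ring
      _ ≤ ∑ m, |(1 - lam) ^ (k - 1) * ∏ j ∈ P m, x j| := abs_sum_le_sum_abs _ _
      _ ≤ ∑ _m : Fin d, |x h ^ (k - 1)| := sum_le_sum fun m _ => hpart m
      _ = d * |x h ^ (k - 1)| := by simp
  exact le_of_mul_le_mul_right hbound (abs_pos.mpr (pow_ne_zero _ hxh))

lemma lapAct_hyperstarEdges_update_one {k : ℕ} (hk : Odd (k - 1)) {μ : ℝ}
    (hμ : (μ - d) * (μ - 1) ^ (k - 1) = d) (hhP : ∀ m, h ∉ P m)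
    (hPdisj : Pairwise (Disjoint on P)) (hPcover : ∀ v, v ≠ h → ∃ m, v ∈ P m)
    (hPne : ∀ m, (P m).Nonempty) (i : α) :
    lapAct k (hyperstarEdges h P) (update (1 : α → ℝ) h (1 - μ)) i
      = μ * update (1 : α → ℝ) h (1 - μ) i ^ (k - 1) := by
  have hleaf : ∀ m, ∀ j ∈ P m, update (1 : α → ℝ) h (1 - μ) j = 1 := fun m j hj =>
    update_of_ne (by rintro rfl; exact hhP m hj) _ _
  by_cases hih : i = h
  · subst hih
    rw [lapAct_hyperstarEdges_heart hhP hPdisj hPne, update_self,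
      sum_congr rfl fun m _ => prod_eq_one (hleaf m)]
    have : (1 - μ) ^ (k - 1) = -(μ - 1) ^ (k - 1) := by rw [← hk.neg_pow, neg_sub]
    simp only [sum_const, card_univ, Fintype.card_fin, nsmul_eq_mul, mul_one, this]
    linear_combination hμ
  · obtain ⟨m, hi⟩ := hPcover i hih
    rw [lapAct_hyperstarEdges_of_mem hhP hPdisj hi, hleaf m i hi, update_self,
      prod_eq_one fun j hj => hleaf m j (mem_of_mem_erase hj)]
    ring

lemma IsLapEig.le_of_hyperstarEdges {k : ℕ} {lam μ : ℝ} (hd : 1 ≤ (d : ℝ)) (hdμ : d < μ)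
    (hμ : (μ - d) * (μ - 1) ^ (k - 1) = d)
    (hhP : ∀ m, h ∉ P m) (hPcard : ∀ m, #(P m) = k - 1) (hPdisj : Pairwise (Disjoint on P))
    (hPcover : ∀ v, v ≠ h → ∃ m, v ∈ P m) (hPne : ∀ m, (P m).Nonempty)
    (hlam : IsLapEig k (hyperstarEdges h P) lam) : lam ≤ μ := by
  rcases hlam.eq_one_or_abs_mul_abs_pow_le_of_hyperstarEdges hhP hPcard hPdisj hPcover hPne
    with rfl | hbound
  · linarith
  by_contra! hμlam
  rw [abs_of_pos (by linarith), abs_of_pos (by linarith)] at hbound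
  have hlt := strictMonoOn_sub_mul_sub_one_pow hd (k - 1) (Set.mem_Ici.mpr hdμ.le)
    (Set.mem_Ici.mpr (by linarith)) hμlam
  simp only [hμ] at hlt
  linarith

end Hyperstar

theorem hyperstar_even_constant_eigvec_general {n k d : ℕ} (hk : 3 ≤ k)
    (hkeven : Even k) (hd : 0 < d) (h : Fin n) (P : Fin d → Finset (Fin n))
    (hhP : ∀ i, h ∉ P i) (hPcard : ∀ i, (P i).card = k - 1)
    (hPdisj : ∀ i j, i ≠ j → Disjoint (P i) (P j))
    (hPcover : ∀ v : Fin n, v ≠ h → ∃ i, v ∈ P i)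
    (E : Finset (Finset (Fin n)))
    (hE : E = Finset.image (fun i => insert h (P i)) Finset.univ)
    (lam : ℝ) (hlam : IsLargestLapEig k E lam) :
    ∃ z : Fin n → ℝ, z ≠ 0 ∧ (∀ i, lapAct k E z i = lam * z i ^ (k - 1)) ∧
      ∃ c : ℝ, ∀ i, i ≠ h → z i ≠ 0 → z i = c := by
  change E = hyperstarEdges h P at hE
  subst hE
  have hPne : ∀ m, (P m).Nonempty := fun m => card_pos.mp (by rw [hPcard]; omega)
  have hd1 : (1 : ℝ) ≤ d := by exact_mod_cast hd
  have hkodd : Odd (k - 1) := by obtain ⟨r, rfl⟩ := hkeven; exact ⟨r - 1, by omega⟩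
  obtain ⟨μ, hdμ, hμ⟩ := exists_gt_sub_mul_sub_one_pow_eq hd1 (k - 1)
  set z : Fin n → ℝ := update 1 h (1 - μ)
  have hz := lapAct_hyperstarEdges_update_one hkodd hμ hhP hPdisj hPcover hPne
  have hz0 : z ≠ 0 := fun hz0 => by
    obtain ⟨j, hj⟩ := hPne ⟨0, hd⟩
    simpa [z, update_of_ne (show j ≠ h by rintro rfl; exact hhP _ hj)] using congrFun hz0 j
  obtain rfl : lam = μ := le_antisymm
    (hlam.1.le_of_hyperstarEdges hd1 hdμ hμ hhP hPcard hPdisj hPcover hPne)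
    (hlam.2 μ ⟨z, hz0, hz⟩)
  exact ⟨z, hz0, hz, 1, fun i hi _ => update_of_ne hi _ _⟩

/-- For `k` even and a `k`-uniform hyperstar of size `d > 0` with heart
`h` and Laplacian tensor `L`, there is an H-eigenvector `z` of `L` corresponding to
`λ(L)` such that `z i` is a constant for all `i` in the support of `z` other than the
heart. -/
theorem hyperstar_even_constant_eigvec {n k d : ℕ} (hk : 3 ≤ k) (hkn : k ≤ n)
    (hkeven : Even k) (hd : 0 < d) (h : Fin n) (P : Fin d → Finset (Fin n))
    (hhP : ∀ i, h ∉ P i) (hPcard : ∀ i, (P i).card = k - 1)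
    (hPdisj : ∀ i j, i ≠ j → Disjoint (P i) (P j))
    (hPcover : ∀ v : Fin n, v ≠ h → ∃ i, v ∈ P i)
    (E : Finset (Finset (Fin n)))
    (hE : E = Finset.image (fun i => insert h (P i)) Finset.univ)
    (lam : ℝ) (hlam : IsLargestLapEig k E lam) :
    ∃ z : Fin n → ℝ, z ≠ 0 ∧ (∀ i, lapAct k E z i = lam * z i ^ (k - 1)) ∧
      ∃ c : ℝ, ∀ i, i ≠ h → z i ≠ 0 → z i = c :=
  hyperstar_even_constant_eigvec_general hk hkeven hd h P hhP hPcard hPdisj hPcover E hE lam hlam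
end
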